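/- arXiv:2001.08493 — 3 statements merged into one kernel-verified Lean document; each statement's English description precedes it below -/
import Mathlib

section
/- Let v be a vertex of a CAT(0) cube complex X with W_v finite, and suppose the link of v is not a cone. Then W_v is a maximal clique in the contact graph of X, and there is no vertex w ≠ v with W_w = W_v. -/
open SimpleGraph

variable {V : Type*}

/-- A median graph: combinatorial model of (the 1-skeleton of) a CAT(0) cube complex. -/
def IsMedianGraph (G : SimpleGraph V) : Prop :=
  G.Connected ∧ ∀ x y z : V, ∃! m : V,
    G.dist x m + G.dist m y = G.dist x y ∧
    G.dist x m + G.dist m z = G.dist x z ∧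
    G.dist y m + G.dist m z = G.dist y z

/-- Djoković–Winkler relation on oriented edges of a median graph; hyperplanes are its classes. -/
def Theta (G : SimpleGraph V) (e f : V × V) : Prop :=
  G.dist e.1 f.1 + G.dist e.2 f.2 ≠ G.dist e.1 f.2 + G.dist e.2 f.1

/-- A hyperplane, identified with the set of (oriented) edges crossing it. -/
def IsHyperplane (G : SimpleGraph V) (h : Set (V × V)) : Prop :=
  ∃ e : V × V, G.Adj e.1 e.2 ∧ h = {f | G.Adj f.1 f.2 ∧ Theta G e f}

/-- The hyperplane `h` is adjacent to the vertex `v` (i.e. `v` lies in the carrier of `h`). -/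
def AdjTo (G : SimpleGraph V) (h : Set (V × V)) (v : V) : Prop :=
  ∃ e ∈ h, e.1 = v ∨ e.2 = v

/-- `Wv G v`: the set of hyperplanes adjacent to `v`. -/
def Wv (G : SimpleGraph V) (v : V) : Set (Set (V × V)) :=
  {h | IsHyperplane G h ∧ AdjTo G h v}

/-- Two hyperplanes are in contact if their carriers share a vertex. -/
def Contact (G : SimpleGraph V) (h h' : Set (V × V)) : Prop :=
  ∃ v : V, AdjTo G h v ∧ AdjTo G h' v

/-- Two hyperplanes are transverse if they cross a common square. -/
def Transverse (G : SimpleGraph V) (h h' : Set (V × V)) : Prop :=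
  ∃ a b c d : V, (a, b) ∈ h ∧ (c, d) ∈ h ∧ (a, c) ∈ h' ∧ (b, d) ∈ h' ∧
    G.Adj a b ∧ G.Adj c d ∧ G.Adj a c ∧ G.Adj b d

/-- A clique in the contact graph: a set of hyperplanes whose carriers pairwise intersect. -/
def IsContactClique (G : SimpleGraph V) (C : Set (Set (V × V))) : Prop :=
  (∀ h ∈ C, IsHyperplane G h) ∧ ∀ h ∈ C, ∀ h' ∈ C, h ≠ h' → Contact G h h'

/-- A maximal clique in the contact graph. -/
def IsMaxContactClique (G : SimpleGraph V) (C : Set (Set (V × V))) : Prop :=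
  IsContactClique G C ∧ ∀ C', IsContactClique G C' → C ⊆ C' → C' = C

/-- The link of `v` is a cone, i.e. `v` is an extremal vertex. -/
def LinkIsCone (G : SimpleGraph V) (v : V) : Prop :=
  ∃ h ∈ Wv G v, ∀ h' ∈ Wv G v, h' ≠ h → Transverse G h h'

/-- Uniform local finiteness. -/
def UnifLocFinite (G : SimpleGraph V) : Prop :=
  ∃ N : ℕ, ∀ v : V, (G.neighborSet v).Finite ∧ (G.neighborSet v).ncard ≤ N

abbrev Hyp (G : SimpleGraph V) := {h : Set (V × V) // IsHyperplane G h}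

/-- The contact graph `𝒞(X)`. -/
def contactGraph (G : SimpleGraph V) : SimpleGraph (Hyp G) where
  Adj h h' := h ≠ h' ∧ Contact G h.1 h'.1
  symm := by
    constructor
    rintro h h' ⟨hne, v, hv, hv'⟩
    exact ⟨hne.symm, v, hv', hv⟩
  loopless := by constructor; rintro h ⟨hne, -⟩; exact hne rfl

/-- `Ical G w` = I(w): the hyperplanes whose carrier contains the carrier of `w`,
i.e. the intersection of the sets `Wv G v` over all vertices `v` adjacent to `w`. -/
def Ical (G : SimpleGraph V) (w : Set (V × V)) : Set (Set (V × V)) :=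
  {u | IsHyperplane G u ∧ ∀ v : V, AdjTo G w v → AdjTo G u v}

/-- `Ical0 G w` = I⁰(w): the hyperplanes with the same carrier as `w`. -/
def Ical0 (G : SimpleGraph V) (w : Set (V × V)) : Set (Set (V × V)) :=
  {u | u ∈ Ical G w ∧ w ∈ Ical G u}

/-- The action of a cubical automorphism on sets of edges (e.g. hyperplanes). -/
def hmap (G : SimpleGraph V) (φ : G ≃g G) (h : Set (V × V)) : Set (V × V) :=
  (fun e : V × V => (φ e.1, φ e.2)) '' h

/-- `π` is the vertex permutation induced by the contact-graph automorphism `ψ` via the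
correspondence between vertices and maximal cliques (`ρ(ψ) = π`). -/
def InducesPerm (G : SimpleGraph V) (ψ : contactGraph G ≃g contactGraph G)
    (π : Equiv.Perm V) : Prop :=
  ∀ (v : V) (h : Hyp G), h.1 ∈ Wv G v ↔ (ψ h).1 ∈ Wv G (π v)

/-- The hyperplane `u` is adjacent, inside the cube complex structure of a hyperplane `w`,
to the vertex of `w` given by the edge `e ∈ w`: `u` crosses a square containing `e`. -/
def HypAdjEdge (G : SimpleGraph V) (u : Set (V × V)) (e : V × V) : Prop :=
  ∃ c d : V, (e.1, c) ∈ u ∧ (e.2, d) ∈ u ∧ G.Adj c d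

/-- The link, in the cube complex structure of hyperplane `w`, of the vertex given by
`e ∈ w` is a cone (i.e. this vertex of `w` is extremal). -/
def HypLinkCone (G : SimpleGraph V) (w : Set (V × V)) (e : V × V) : Prop :=
  ∃ u, IsHyperplane G u ∧ u ≠ w ∧ HypAdjEdge G u e ∧
    ∀ u', IsHyperplane G u' → u' ≠ w → HypAdjEdge G u' e → u' ≠ u → Transverse G u u'

/-- No hyperplane of `X` has an extremal vertex. -/
def NoHypExtremalVertex (G : SimpleGraph V) : Prop :=
  ∀ w, IsHyperplane G w → ∀ e ∈ w, ¬ HypLinkCone G w e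


/-!
Throughout, `G.dist x b = G.dist x a + 1` says that `x` lies in the halfspace of `a` with respect
to the edge `ab`; the hyperplane `hyperplaneOf G a b` consists of the edges joining the two
halfspaces. Halfspaces and carriers of hyperplanes are geodesically convex, so carriers are gated.
The key geometric fact is that if the hyperplane of an edge separates two vertices of the carrier
of another hyperplane `h`, the two hyperplanes cross a common square.

If `w ≠ v` has `W_w = W_v`, let `x` be the first vertex of a geodesic from `v` to `w`: the
hyperplane of `vx` separates `v` from `w`, and both lie in the carrier of every `h ∈ W_v`, so it is
transverse to every other member of `W_v` and the link of `v` is a cone. If a hyperplane `u ∉ W_v`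
touches every member of `W_v`, the same argument works with the gate of `v` in the carrier of `u`
in place of `w`.
-/

namespace SimpleGraph

def IsGeodesicallyConvex (G : SimpleGraph V) (S : Set V) : Prop :=
  ∀ ⦃p⦄, p ∈ S → ∀ ⦃q⦄, q ∈ S → ∀ z, G.dist p z + G.dist z q = G.dist p q → z ∈ S

variable {G : SimpleGraph V}

lemma exists_adj_dist_eq_of_dist_eq_add_one {u w : V} {k : ℕ} (h : G.dist u w = k + 1) :
    ∃ u', G.Adj u u' ∧ G.dist u' w = k := by
  obtain ⟨p, hp⟩ :=
    (Reachable.of_dist_ne_zero (by omega : G.dist u w ≠ 0)).exists_walk_length_eq_dist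
  cases p with
  | nil => simp at h
  | @cons _ u' _ hadj q =>
    obtain ⟨r, hr⟩ := q.reachable.exists_walk_length_eq_dist
    have hq := dist_le q
    have hr' := dist_le (Walk.cons hadj r)
    simp only [Walk.length_cons] at hp hr'
    exact ⟨u', hadj, by omega⟩

end SimpleGraph

namespace IsMedianGraph

variable {G : SimpleGraph V}

lemma dist_eq_add_one_or (hG : IsMedianGraph G) {a b : V} (hab : G.Adj a b) (z : V) :
    G.dist z b = G.dist z a + 1 ∨ G.dist z a = G.dist z b + 1 := by
  obtain ⟨m, ⟨h₁, h₂, h₃⟩, -⟩ := hG.2 a b z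
  have hab₁ : G.dist a b = 1 := dist_eq_one_iff_adj.mpr hab
  obtain ha | hb : G.dist a m = 0 ∨ G.dist m b = 0 := by omega
  · obtain rfl := hG.1.dist_eq_zero_iff.mp ha
    grind [SimpleGraph.dist_comm]
  · obtain rfl := hG.1.dist_eq_zero_iff.mp hb
    grind [SimpleGraph.dist_comm]

lemma not_adj_of_adj_of_adj (hG : IsMedianGraph G) {x y z : V} (hxy : G.Adj x y)
    (hyz : G.Adj y z) : ¬ G.Adj x z := by
  intro hxz
  have := hG.dist_eq_add_one_or hyz x
  rw [dist_eq_one_iff_adj.mpr hxy, dist_eq_one_iff_adj.mpr hxz] at this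
  omega

lemma dist_eq_two_of_adj_of_adj (hG : IsMedianGraph G) {x y z : V} (hxy : G.Adj x y)
    (hyz : G.Adj y z) (hne : x ≠ z) : G.dist x z = 2 := by
  have h0 : G.dist x z ≠ 0 := fun h ↦ hne (hG.1.dist_eq_zero_iff.mp h)
  have h1 : G.dist x z ≠ 1 := fun h ↦
    hG.not_adj_of_adj_of_adj hxy hyz (dist_eq_one_iff_adj.mp h)
  have := hG.1.dist_triangle (u := x) (v := y) (w := z)
  rw [dist_eq_one_iff_adj.mpr hxy, dist_eq_one_iff_adj.mpr hyz] at this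
  omega

lemma quadrangle (hG : IsMedianGraph G) {u w z₁ z₂ : V} {k : ℕ} (h₁ : G.Adj w z₁)
    (h₂ : G.Adj w z₂) (hne : z₁ ≠ z₂) (hd₁ : G.dist u z₁ = k) (hd₂ : G.dist u z₂ = k) :
    ∃ t, G.Adj z₁ t ∧ G.Adj z₂ t ∧ G.dist u t + 1 = k := by
  have hz := hG.dist_eq_two_of_adj_of_adj h₁.symm h₂ hne
  obtain ⟨m, ⟨m₁, m₂, m₃⟩, -⟩ := hG.2 z₁ z₂ u
  have e₁ : G.dist z₁ m = 1 := by grind [SimpleGraph.dist_comm]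
  have e₂ : G.dist z₂ m = 1 := by grind [SimpleGraph.dist_comm]
  exact ⟨m, dist_eq_one_iff_adj.mp e₁, dist_eq_one_iff_adj.mp e₂, by grind [SimpleGraph.dist_comm]⟩

lemma not_between_of_crossing (hG : IsMedianGraph G) {a b x z y : V} (hab : G.Adj a b)
    (hxz : G.Adj x z) (hx : G.dist x b = G.dist x a + 1) (hz : G.dist z a = G.dist z b + 1)
    (hy : G.dist y b = G.dist y a + 1) (hyx : G.dist y x = G.dist y z + 1) :
    G.dist y z + G.dist z b ≠ G.dist y b := by
  intro hyzb
  have hxz₁ : G.dist x z = 1 := dist_eq_one_iff_adj.mpr hxz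
  have hxa : G.dist x a = G.dist z b := by
    grind [SimpleGraph.dist_comm, hG.dist_eq_add_one_or hxz a, hG.dist_eq_add_one_or hxz b]
  -- the median of `x, y, a` is a neighbour of `x` that is also a median of `x, y, b`
  obtain ⟨M, ⟨M₁, M₂, M₃⟩, -⟩ := hG.2 x y a
  have hxM : G.dist x M = 1 := by grind [SimpleGraph.dist_comm]
  have hMb : G.dist M b = G.dist z b := by
    grind [SimpleGraph.dist_comm, hG.dist_eq_add_one_or hab M,
      hG.dist_eq_add_one_or (dist_eq_one_iff_adj.mp hxM) b]
  have hzM : z = M := (hG.2 x y b).unique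
    ⟨by grind [SimpleGraph.dist_comm], by omega, hyzb⟩
    ⟨M₁, by omega, by grind [SimpleGraph.dist_comm]⟩
  subst hzM
  omega

lemma exists_closer_crossing_of_dist_eq (hG : IsMedianGraph G) {a b x z y : V} (hab : G.Adj a b)
    (hxz : G.Adj x z) (hx : G.dist x b = G.dist x a + 1) (hz : G.dist z a = G.dist z b + 1)
    (hy : G.dist y b = G.dist y a + 1) (hyx : G.dist y x = G.dist y z + 1) :
    ∃ x' z', G.Adj x' z' ∧ G.dist x' b = G.dist x' a + 1 ∧ G.dist z' a = G.dist z' b + 1 ∧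
      G.dist y x' = G.dist y z' + 1 ∧ G.dist y z' < G.dist y z := by
  obtain ⟨m, ⟨m₁, m₂, m₃⟩, -⟩ := hG.2 z y b
  have hzm : G.dist z m ≠ 0 := fun h ↦ by
    obtain rfl := hG.1.dist_eq_zero_iff.mp h
    exact hG.not_between_of_crossing hab hxz hx hz hy hyx (by grind [SimpleGraph.dist_comm])
  obtain ⟨z', hzz', hz'm⟩ :=
    exists_adj_dist_eq_of_dist_eq_add_one (show G.dist z m = (G.dist z m - 1) + 1 by omega)
  have hz'y : G.dist y z' + 1 = G.dist y z := by
    grind [SimpleGraph.dist_comm, hG.1.dist_triangle (u := z') (v := m) (w := y),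
      hG.1.dist_triangle (u := z) (v := z') (w := y), dist_eq_one_iff_adj]
  have hz'b : G.dist z' b + 1 = G.dist z b := by
    grind [SimpleGraph.dist_comm, hG.1.dist_triangle (u := z') (v := m) (w := b),
      hG.1.dist_triangle (u := z) (v := z') (w := b), dist_eq_one_iff_adj]
  have hxa : G.dist x a = G.dist z b := by
    grind [SimpleGraph.dist_comm, hG.dist_eq_add_one_or hxz a, hG.dist_eq_add_one_or hxz b]
  have hz'a : G.dist z' a = G.dist z b := by
    grind [SimpleGraph.dist_comm, hG.dist_eq_add_one_or hzz' a, hG.dist_eq_add_one_or hab z']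
  have hxz' : x ≠ z' := by rintro rfl; omega
  obtain ⟨t, hxt, hz't, hta⟩ := hG.quadrangle hxz.symm hzz' hxz' (u := a) (k := G.dist z b)
    (by grind [SimpleGraph.dist_comm]) (by grind [SimpleGraph.dist_comm])
  refine ⟨t, z', hz't.symm, ?_, by omega, ?_, by omega⟩
  · grind [SimpleGraph.dist_comm, hG.dist_eq_add_one_or hab t, hG.dist_eq_add_one_or hxt b]
  · grind [hG.dist_eq_add_one_or hz't y, hG.dist_eq_add_one_or hxt y]

lemma dist_eq_add_one_of_crossing (hG : IsMedianGraph G) {a b x z y : V} (hab : G.Adj a b)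
    (hxz : G.Adj x z) (hx : G.dist x b = G.dist x a + 1) (hz : G.dist z a = G.dist z b + 1)
    (hy : G.dist y b = G.dist y a + 1) : G.dist y z = G.dist y x + 1 := by
  induction hn : G.dist y z using Nat.strong_induction_on generalizing x z with
  | _ n ih =>
  subst hn
  refine (hG.dist_eq_add_one_or hxz y).resolve_right fun hyx ↦ ?_
  obtain ⟨x', z', hx'z', hx', hz', hyx', hlt⟩ :=
    hG.exists_closer_crossing_of_dist_eq hab hxz hx hz hy hyx
  have := ih _ hlt hx'z' hx' hz' rfl
  omega

lemma isGeodesicallyConvex_halfspace (hG : IsMedianGraph G) {a b : V} (hab : G.Adj a b) :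
    G.IsGeodesicallyConvex {x | G.dist x b = G.dist x a + 1} := by
  intro p (hp : G.dist p b = G.dist p a + 1) q (hq : G.dist q b = G.dist q a + 1) z hz
  induction hn : G.dist p z generalizing p with
  | zero => rwa [← hG.1.dist_eq_zero_iff.mp hn]
  | succ n ih =>
    obtain ⟨p', hpp', hp'z⟩ := exists_adj_dist_eq_of_dist_eq_add_one hn
    have hp' : G.dist p' b = G.dist p' a + 1 := by
      refine (hG.dist_eq_add_one_or hab p').resolve_right fun hp' ↦ ?_
      have := hG.dist_eq_add_one_of_crossing hab hpp' hp hp' hq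
      grind [SimpleGraph.dist_comm, hG.1.dist_triangle (u := p') (v := z) (w := q)]
    refine ih hp' ?_ hp'z
    grind [hG.1.dist_triangle (u := p) (v := p') (w := q),
      hG.1.dist_triangle (u := p') (v := z) (w := q), dist_eq_one_iff_adj]

end IsMedianGraph

def hyperplaneOf (G : SimpleGraph V) (a b : V) : Set (V × V) :=
  {f | G.Adj f.1 f.2 ∧
    (G.dist f.1 b = G.dist f.1 a + 1 ∧ G.dist f.2 a = G.dist f.2 b + 1 ∨
     G.dist f.1 a = G.dist f.1 b + 1 ∧ G.dist f.2 b = G.dist f.2 a + 1)}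

lemma hyperplaneOf_comm (G : SimpleGraph V) (a b : V) :
    hyperplaneOf G a b = hyperplaneOf G b a := by
  ext f
  simp only [hyperplaneOf, Set.mem_ofPred_eq]
  tauto

section hyperplaneOf

variable {G : SimpleGraph V} {a b x y : V}

lemma swap_mem_hyperplaneOf (h : (x, y) ∈ hyperplaneOf G a b) :
    (y, x) ∈ hyperplaneOf G a b :=
  ⟨h.1.symm, h.2.symm.imp And.symm And.symm⟩

lemma mem_hyperplaneOf_self (hab : G.Adj a b) : (a, b) ∈ hyperplaneOf G a b := by
  refine ⟨hab, .inl ⟨?_, ?_⟩⟩ <;>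
    simp [dist_eq_one_iff_adj.mpr hab, dist_eq_one_iff_adj.mpr hab.symm]

lemma dist_eq_add_one_of_mem_hyperplaneOf (h : (x, y) ∈ hyperplaneOf G a b)
    (hx : G.dist x b = G.dist x a + 1) : G.dist y a = G.dist y b + 1 := by
  rcases h with ⟨-, ⟨-, hy⟩ | ⟨hx', -⟩⟩
  · exact hy
  · dsimp only at hx'
    omega

lemma adjTo_hyperplaneOf_iff {v : V} :
    AdjTo G (hyperplaneOf G a b) v ↔ ∃ w, (v, w) ∈ hyperplaneOf G a b := by
  constructor
  · rintro ⟨⟨x, y⟩, h, rfl | rfl⟩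
    exacts [⟨y, h⟩, ⟨x, swap_mem_hyperplaneOf h⟩]
  · rintro ⟨w, h⟩
    exact ⟨(v, w), h, .inl rfl⟩

end hyperplaneOf

namespace IsMedianGraph

variable {G : SimpleGraph V}

lemma setOf_theta_eq_hyperplaneOf (hG : IsMedianGraph G) {a b : V} (hab : G.Adj a b) :
    {f : V × V | G.Adj f.1 f.2 ∧ Theta G (a, b) f} = hyperplaneOf G a b := by
  ext ⟨x, y⟩
  simp only [Set.mem_ofPred_eq, hyperplaneOf, Theta]
  grind [SimpleGraph.dist_comm, hG.dist_eq_add_one_or hab x, hG.dist_eq_add_one_or hab y]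

lemma isHyperplane_hyperplaneOf (hG : IsMedianGraph G) {a b : V} (hab : G.Adj a b) :
    IsHyperplane G (hyperplaneOf G a b) :=
  ⟨(a, b), hab, (hG.setOf_theta_eq_hyperplaneOf hab).symm⟩

lemma exists_eq_hyperplaneOf (hG : IsMedianGraph G) {h : Set (V × V)} (hh : IsHyperplane G h) :
    ∃ a b, G.Adj a b ∧ h = hyperplaneOf G a b := by
  obtain ⟨⟨a, b⟩, hab, rfl⟩ := hh
  exact ⟨a, b, hab, hG.setOf_theta_eq_hyperplaneOf hab⟩

lemma dist_eq_add_one_iff_of_crossing (hG : IsMedianGraph G) {a b c e : V} (hab : G.Adj a b)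
    (hce : G.Adj c e) (hc : G.dist c b = G.dist c a + 1) (he : G.dist e a = G.dist e b + 1)
    (x : V) : G.dist x e = G.dist x c + 1 ↔ G.dist x b = G.dist x a + 1 := by
  refine ⟨fun hx ↦ (hG.dist_eq_add_one_or hab x).resolve_right fun hx' ↦ ?_,
    hG.dist_eq_add_one_of_crossing hab hce hc he⟩
  have := hG.dist_eq_add_one_of_crossing hab.symm hce.symm he hc hx'
  omega

lemma hyperplaneOf_eq_of_mem (hG : IsMedianGraph G) {a b c e : V} (hab : G.Adj a b)
    (h : (c, e) ∈ hyperplaneOf G a b) : hyperplaneOf G c e = hyperplaneOf G a b := by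
  wlog hc : G.dist c b = G.dist c a + 1 generalizing a b
  · rw [hyperplaneOf_comm G a b] at h ⊢
    exact this hab.symm h ((hG.dist_eq_add_one_or hab c).resolve_left hc)
  have he := dist_eq_add_one_of_mem_hyperplaneOf h hc
  ext ⟨x, y⟩
  simp only [hyperplaneOf, Set.mem_ofPred_eq,
    hG.dist_eq_add_one_iff_of_crossing hab h.1 hc he,
    hG.dist_eq_add_one_iff_of_crossing hab.symm h.1.symm he hc]

lemma hyperplaneOf_eq_of_mem_of_mem (hG : IsMedianGraph G) {a b c d x y : V} (hab : G.Adj a b)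
    (hcd : G.Adj c d) (h₁ : (x, y) ∈ hyperplaneOf G a b) (h₂ : (x, y) ∈ hyperplaneOf G c d) :
    hyperplaneOf G a b = hyperplaneOf G c d :=
  (hG.hyperplaneOf_eq_of_mem hab h₁).symm.trans (hG.hyperplaneOf_eq_of_mem hcd h₂)

lemma adjTo_of_between_of_near (hG : IsMedianGraph G) {a b y₁ y₁' y₂ y₂' z : V}
    (hab : G.Adj a b) (h₁ : G.Adj y₁ y₁') (h₂ : G.Adj y₂ y₂')
    (hy₁ : G.dist y₁ b = G.dist y₁ a + 1) (hy₂ : G.dist y₂ b = G.dist y₂ a + 1)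
    (hy₁' : G.dist y₁' a = G.dist y₁' b + 1) (hy₂' : G.dist y₂' a = G.dist y₂' b + 1)
    (hz : G.dist y₁ z + G.dist z y₂ = G.dist y₁ y₂) : AdjTo G (hyperplaneOf G a b) z := by
  have hza : G.dist z b = G.dist z a + 1 := hG.isGeodesicallyConvex_halfspace hab hy₁ hy₂ z hz
  have g₁ := hG.dist_eq_add_one_of_crossing hab h₁ hy₁ hy₁' hza
  have g₂ := hG.dist_eq_add_one_of_crossing hab h₂ hy₂ hy₂' hza
  have g₃ := hG.dist_eq_add_one_of_crossing hab h₁ hy₁ hy₁' hy₂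
  have g₄ := hG.dist_eq_add_one_of_crossing hab.symm h₂.symm hy₂' hy₂ hy₁'
  -- the median of `z, y₁', y₂'` is a neighbour of `z` across the wall
  obtain ⟨t, ⟨t₁, t₂, t₃⟩, -⟩ := hG.2 z y₁' y₂'
  have hzt : G.dist z t = 1 := by grind [SimpleGraph.dist_comm]
  have ht : G.dist t a = G.dist t b + 1 := by
    refine (hG.dist_eq_add_one_or hab t).resolve_left fun hta ↦ ?_
    have := hG.dist_eq_add_one_of_crossing hab h₁ hy₁ hy₁' hta
    have := hG.dist_eq_add_one_of_crossing hab h₂ hy₂ hy₂' hta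
    grind [SimpleGraph.dist_comm, hG.1.dist_triangle (u := y₁) (v := t) (w := y₂)]
  exact adjTo_hyperplaneOf_iff.mpr ⟨t, dist_eq_one_iff_adj.mp hzt, .inl ⟨hza, ht⟩⟩

lemma exists_near_of_adjTo (hG : IsMedianGraph G) {a b p : V} (hab : G.Adj a b)
    (hp : AdjTo G (hyperplaneOf G a b) p) :
    ∃ p₀ p₀', G.Adj p₀ p₀' ∧ G.dist p₀ b = G.dist p₀ a + 1 ∧
      G.dist p₀' a = G.dist p₀' b + 1 ∧
      ∀ y, G.dist y b = G.dist y a + 1 → G.dist y p = G.dist y p₀ + G.dist p₀ p := by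
  obtain ⟨p', hpp', ⟨hpa, hp'b⟩ | ⟨hpb, hp'a⟩⟩ := adjTo_hyperplaneOf_iff.mp hp
  · exact ⟨p, p', hpp', hpa, hp'b, fun y _ ↦ by simp⟩
  · refine ⟨p', p, hpp'.symm, hp'a, hpb, fun y hy ↦ ?_⟩
    rw [dist_eq_one_iff_adj.mpr hpp'.symm]
    exact hG.dist_eq_add_one_of_crossing hab hpp'.symm hp'a hpb hy

lemma adjTo_of_between (hG : IsMedianGraph G) {a b p q z : V} (hab : G.Adj a b)
    (hp : AdjTo G (hyperplaneOf G a b) p) (hq : AdjTo G (hyperplaneOf G a b) q)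
    (hz : G.dist p z + G.dist z q = G.dist p q) (hza : G.dist z b = G.dist z a + 1) :
    AdjTo G (hyperplaneOf G a b) z := by
  obtain ⟨p₀, p₀', h₁, hp₀, hp₀', hp⟩ := hG.exists_near_of_adjTo hab hp
  obtain ⟨q₀, q₀', h₂, hq₀, hq₀', hq⟩ := hG.exists_near_of_adjTo hab hq
  refine hG.adjTo_of_between_of_near hab h₁ h₂ hp₀ hq₀ hp₀' hq₀' ?_
  grind [SimpleGraph.dist_comm, hp z hza, hq z hza, hG.1.dist_triangle (u := p₀) (v := z) (w := q₀),
    hG.1.dist_triangle (u := p) (v := p₀) (w := q), hG.1.dist_triangle (u := p₀) (v := q₀) (w := q)]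

lemma isGeodesicallyConvex_carrier (hG : IsMedianGraph G) {h : Set (V × V)}
    (hh : IsHyperplane G h) : G.IsGeodesicallyConvex {z | AdjTo G h z} := by
  obtain ⟨a, b, hab, rfl⟩ := hG.exists_eq_hyperplaneOf hh
  intro p hp q hq z hz
  rcases hG.dist_eq_add_one_or hab z with hza | hzb
  · exact hG.adjTo_of_between hab hp hq hz hza
  · rw [Set.mem_ofPred_eq, hyperplaneOf_comm] at *
    exact hG.adjTo_of_between hab.symm hp hq hz hzb

lemma exists_gate (hG : IsMedianGraph G) {S : Set V} (hS : G.IsGeodesicallyConvex S)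
    (hne : S.Nonempty) (v : V) : ∃ g ∈ S, ∀ c ∈ S, G.dist v g + G.dist g c = G.dist v c := by
  obtain ⟨g, hg, hmin⟩ := (measure (G.dist v)).wf.has_min S hne
  refine ⟨g, hg, fun c hc ↦ ?_⟩
  obtain ⟨m, ⟨m₁, m₂, m₃⟩, -⟩ := hG.2 v g c
  have hmg : ¬ G.dist v m < G.dist v g := hmin m (hS hg hc m m₃)
  obtain rfl : m = g := hG.1.dist_eq_zero_iff.mp (by omega)
  exact m₂

lemma exists_crossing_between (hG : IsMedianGraph G) {a b p q : V} (hab : G.Adj a b)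
    (hp : G.dist p b = G.dist p a + 1) (hq : G.dist q a = G.dist q b + 1) :
    ∃ s t, G.Adj s t ∧ G.dist s b = G.dist s a + 1 ∧ G.dist t a = G.dist t b + 1 ∧
      G.dist p s + G.dist s q = G.dist p q ∧ G.dist p t + G.dist t q = G.dist p q := by
  induction hn : G.dist p q generalizing p with
  | zero => obtain rfl := hG.1.dist_eq_zero_iff.mp hn; omega
  | succ n ih =>
    obtain ⟨p', hpp', hp'q⟩ := exists_adj_dist_eq_of_dist_eq_add_one hn
    rcases hG.dist_eq_add_one_or hab p' with hp' | hp'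
    · obtain ⟨s, t, hst, hs, ht, hsb, htb⟩ := ih hp' hp'q
      refine ⟨s, t, hst, hs, ht, ?_, ?_⟩ <;>
        grind [dist_eq_one_iff_adj, hG.1.dist_triangle (u := p) (v := p') (w := s),
          hG.1.dist_triangle (u := p) (v := s) (w := q),
          hG.1.dist_triangle (u := p) (v := p') (w := t),
          hG.1.dist_triangle (u := p) (v := t) (w := q)]
    · exact ⟨p, p', hpp', hp, hp', by simp [hn], by grind [dist_eq_one_iff_adj]⟩

lemma adj_of_crossing_path (hG : IsMedianGraph G) {c d s t s' t' : V} (hcd : G.Adj c d)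
    (hss' : G.Adj s s') (hst : G.Adj s t) (htt' : G.Adj t t')
    (hs : G.dist s d = G.dist s c + 1) (ht : G.dist t d = G.dist t c + 1)
    (hs' : G.dist s' c = G.dist s' d + 1) (ht' : G.dist t' c = G.dist t' d + 1) :
    G.Adj s' t' := by
  have hs't := hG.dist_eq_two_of_adj_of_adj hss'.symm hst (by rintro rfl; omega)
  have hst' := hG.dist_eq_two_of_adj_of_adj hst htt' (by rintro rfl; omega)
  obtain ⟨m, ⟨m₁, m₂, m₃⟩, -⟩ := hG.2 s' t' t
  rw [dist_eq_one_iff_adj.mpr htt'.symm] at m₃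
  obtain hm | hm : G.dist t' m = 0 ∨ G.dist m t = 0 := by omega
  · obtain rfl := hG.1.dist_eq_zero_iff.mp hm
    exact dist_eq_one_iff_adj.mp (by grind [SimpleGraph.dist_comm, dist_eq_one_iff_adj])
  · -- otherwise `s` lies between `s'` and `t'`, on the wrong side of the wall of `cd`
    obtain rfl := hG.1.dist_eq_zero_iff.mp hm
    have : G.dist s c = G.dist s d + 1 := hG.isGeodesicallyConvex_halfspace hcd.symm hs' ht' s
      (by grind [SimpleGraph.dist_comm, dist_eq_one_iff_adj])
    omega

lemma dist_eq_add_one_of_mem_of_ne (hG : IsMedianGraph G) {a b c d s s' : V}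
    (hab : G.Adj a b) (hcd : G.Adj c d) (hne : hyperplaneOf G a b ≠ hyperplaneOf G c d)
    (hss' : (s, s') ∈ hyperplaneOf G c d) (hs : G.dist s b = G.dist s a + 1) :
    G.dist s' b = G.dist s' a + 1 :=
  (hG.dist_eq_add_one_or hab s').resolve_right fun hs' ↦
    hne (hG.hyperplaneOf_eq_of_mem_of_mem hab hcd ⟨hss'.1, .inl ⟨hs, hs'⟩⟩ hss')

lemma transverse_of_crossing_edge (hG : IsMedianGraph G) {a b c d s t : V} (hab : G.Adj a b)
    (hcd : G.Adj c d) (hne : hyperplaneOf G a b ≠ hyperplaneOf G c d) (hst : G.Adj s t)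
    (hsa : G.dist s b = G.dist s a + 1) (htb : G.dist t a = G.dist t b + 1)
    (hsc : G.dist s d = G.dist s c + 1) (htc : G.dist t d = G.dist t c + 1)
    (hs : AdjTo G (hyperplaneOf G c d) s) (ht : AdjTo G (hyperplaneOf G c d) t) :
    Transverse G (hyperplaneOf G a b) (hyperplaneOf G c d) := by
  obtain ⟨s', hss'⟩ := adjTo_hyperplaneOf_iff.mp hs
  obtain ⟨t', htt'⟩ := adjTo_hyperplaneOf_iff.mp ht
  have hs'a := hG.dist_eq_add_one_of_mem_of_ne hab hcd hne hss' hsa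
  have ht'b := hG.dist_eq_add_one_of_mem_of_ne hab.symm hcd
    (by rwa [hyperplaneOf_comm G b a]) htt' htb
  have hs't' := hG.adj_of_crossing_path hcd hss'.1 hst htt'.1 hsc htc
    (dist_eq_add_one_of_mem_hyperplaneOf hss' hsc) (dist_eq_add_one_of_mem_hyperplaneOf htt' htc)
  exact ⟨s, t, s', t', ⟨hst, .inl ⟨hsa, htb⟩⟩, ⟨hs't', .inl ⟨hs'a, ht'b⟩⟩, hss', htt',
    hst, hs't', hss'.1, htt'.1⟩

lemma transverse_of_separates (hG : IsMedianGraph G) {a b p q : V} {h : Set (V × V)}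
    (hab : G.Adj a b) (hh : IsHyperplane G h) (hne : hyperplaneOf G a b ≠ h)
    (hp : AdjTo G h p) (hq : AdjTo G h q) (hpa : G.dist p b = G.dist p a + 1)
    (hqb : G.dist q a = G.dist q b + 1) : Transverse G (hyperplaneOf G a b) h := by
  obtain ⟨s, t, hst, hsa, htb, hs, ht⟩ := hG.exists_crossing_between hab hpa hqb
  have hsh : AdjTo G h s := hG.isGeodesicallyConvex_carrier hh hp hq s hs
  have hth : AdjTo G h t := hG.isGeodesicallyConvex_carrier hh hp hq t ht
  obtain ⟨c, d, hcd, rfl⟩ := hG.exists_eq_hyperplaneOf hh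
  have hst_mem : (s, t) ∈ hyperplaneOf G a b := ⟨hst, .inl ⟨hsa, htb⟩⟩
  rcases hG.dist_eq_add_one_or hcd s with hsc | hsd
  · exact hG.transverse_of_crossing_edge hab hcd hne hst hsa htb hsc
      (hG.dist_eq_add_one_of_mem_of_ne hcd hab hne.symm hst_mem hsc) hsh hth
  · rw [hyperplaneOf_comm G c d] at hne hsh hth ⊢
    exact hG.transverse_of_crossing_edge hab hcd.symm hne hst hsa htb hsd
      (hG.dist_eq_add_one_of_mem_of_ne hcd.symm hab hne.symm hst_mem hsd) hsh hth

lemma linkIsCone_of_separates (hG : IsMedianGraph G) {v x : V} (hvx : G.Adj v x)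
    (hsep : ∀ h ∈ Wv G v, ∃ y, AdjTo G h y ∧ G.dist y v = G.dist y x + 1) :
    LinkIsCone G v := by
  refine ⟨hyperplaneOf G v x, ⟨hG.isHyperplane_hyperplaneOf hvx, _, mem_hyperplaneOf_self hvx,
    .inl rfl⟩, fun h hh hne ↦ ?_⟩
  obtain ⟨y, hy, hyx⟩ := hsep h hh
  exact hG.transverse_of_separates hvx hh.1 hne.symm hh.2 hy
    (by simp [dist_eq_one_iff_adj.mpr hvx]) hyx

lemma linkIsCone_of_Wv_eq (hG : IsMedianGraph G) {v w : V} (hne : w ≠ v)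
    (hW : Wv G w = Wv G v) : LinkIsCone G v := by
  have hvw : G.dist v w ≠ 0 := fun h ↦ hne (hG.1.dist_eq_zero_iff.mp h).symm
  obtain ⟨x, hvx, hxw⟩ :=
    exists_adj_dist_eq_of_dist_eq_add_one (show G.dist v w = (G.dist v w - 1) + 1 by omega)
  refine hG.linkIsCone_of_separates hvx fun h hh ↦ ⟨w, (hW ▸ hh).2, ?_⟩
  grind [SimpleGraph.dist_comm]

lemma linkIsCone_of_not_adjTo (hG : IsMedianGraph G) {v : V} {u : Set (V × V)}
    (hu : IsHyperplane G u) (hv : ¬ AdjTo G u v)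
    (hcontact : ∀ h ∈ Wv G v, Contact G u h) : LinkIsCone G v := by
  obtain ⟨a, b, hab, rfl⟩ := hG.exists_eq_hyperplaneOf hu
  obtain ⟨g, hg, hgate⟩ := hG.exists_gate (hG.isGeodesicallyConvex_carrier hu)
    ⟨a, adjTo_hyperplaneOf_iff.mpr ⟨b, mem_hyperplaneOf_self hab⟩⟩ v
  have hvg : G.dist v g ≠ 0 := fun h ↦ hv (hG.1.dist_eq_zero_iff.mp h ▸ hg)
  obtain ⟨x, hvx, hxg⟩ :=
    exists_adj_dist_eq_of_dist_eq_add_one (show G.dist v g = (G.dist v g - 1) + 1 by omega)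
  refine hG.linkIsCone_of_separates hvx fun h hh ↦ ?_
  obtain ⟨y, hyu, hyh⟩ := hcontact h hh
  refine ⟨y, hyh, ?_⟩
  grind [SimpleGraph.dist_comm, hgate y hyu, hG.1.dist_triangle (u := x) (v := g) (w := y),
    hG.1.dist_triangle (u := v) (v := x) (w := y), dist_eq_one_iff_adj]

end IsMedianGraph

theorem Wv_max_clique_of_not_cone_general (G : SimpleGraph V) (hG : IsMedianGraph G)
    (v : V) (hnc : ¬ LinkIsCone G v) :
    IsMaxContactClique G (Wv G v) ∧ ∀ w : V, Wv G w = Wv G v → w = v := by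
  have hclique : IsContactClique G (Wv G v) :=
    ⟨fun _ hh ↦ hh.1, fun _ hh _ hh' _ ↦ ⟨v, hh.2, hh'.2⟩⟩
  refine ⟨⟨hclique, fun C hC hsub ↦ Set.Subset.antisymm (fun u hu ↦ ?_) hsub⟩, fun w hw ↦ ?_⟩
  · by_contra hvu
    exact hnc (hG.linkIsCone_of_not_adjTo (hC.1 u hu) (fun h ↦ hvu ⟨hC.1 u hu, h⟩)
      fun h hh ↦ hC.2 u hu h (hsub hh) (by rintro rfl; exact hvu hh))
  · by_contra hne
    exact hnc (hG.linkIsCone_of_Wv_eq hne hw)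

/-- if the link of `v` is not a cone (and `Wv G v` is finite), then `Wv G v`
is a maximal clique of the contact graph, realized by no other vertex. -/
theorem Wv_max_clique_of_not_cone (G : SimpleGraph V) (hG : IsMedianGraph G)
    (v : V) (hfin : (Wv G v).Finite) (hnc : ¬ LinkIsCone G v) :
    IsMaxContactClique G (Wv G v) ∧ ∀ w : V, Wv G w = Wv G v → w = v :=
  Wv_max_clique_of_not_cone_general G hG v hnc
end

section
/- Let X be a uniformly locally finite CAT(0) cube complex with no extremal vertices. Then the natural homomorphism ι : Aut(X) → Aut(C(X)) induced by the action on hyperplanes is injective; moreover there is a homomorphism ρ : Aut(C(X)) → Sym(X^(0)) with ρ ∘ ι = id. -/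
open SimpleGraph

variable {V : Type*}

/-!
A vertex `v` of `X` is recorded in `𝒞(X)` by the clique `W_v` of hyperplanes adjacent to it.
Halfspaces of a median graph, and hence carriers of hyperplanes, are convex, and convex sets
have the Helly property, so every finite clique of `𝒞(X)` lies in some `W_u`; uniform local
finiteness bounds the size of the `W_u` and thus makes every clique finite. Without extremal
vertices, `W_v ⊆ W_u` forces `v = u`. Hence an automorphism `ψ` of `𝒞(X)` maps each `W_v`
onto a unique `W_u`, and `ρ ψ v := u` is the required homomorphism; the same injectivity of
`v ↦ W_v` shows that `ι` is injective.
-/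

lemma SimpleGraph.Connected.exists_adj_dist_eq {G : SimpleGraph V} (hconn : G.Connected)
    {x y : V} {n : ℕ} (h : G.dist x y = n + 1) : ∃ z, G.Adj x z ∧ G.dist z y = n := by
  obtain ⟨p, hp⟩ := hconn.exists_walk_length_eq_dist x y
  cases p with
  | nil => simp at h
  | @cons _ z _ hadj q =>
    refine ⟨z, hadj, le_antisymm ?_ ?_⟩
    · have := G.dist_le q
      rw [Walk.length_cons] at hp
      omega
    · have := hconn.dist_triangle (u := x) (v := z) (w := y)
      rw [dist_eq_one_iff_adj.mpr hadj] at this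
      omega

/-- For an edge `ab` of a median graph, `{x | CloserTo G a b x}` is the halfspace `W(a, b)`. -/
def CloserTo (G : SimpleGraph V) (a b x : V) : Prop :=
  G.dist x a + 1 = G.dist x b

lemma CloserTo.not_swap {G : SimpleGraph V} {a b x : V} (h : CloserTo G a b x) :
    ¬ CloserTo G b a x := by
  unfold CloserTo at *
  omega

namespace IsMedianGraph

variable {G : SimpleGraph V} {a b x x' y : V}

lemma eq_of_dist_eq_zero (hG : IsMedianGraph G) {u v : V} (h : G.dist u v = 0) : u = v :=
  hG.1.dist_eq_zero_iff.mp h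

lemma closerTo_or_closerTo (hG : IsMedianGraph G) (hab : G.Adj a b) (x : V) :
    CloserTo G a b x ∨ CloserTo G b a x := by
  obtain ⟨m, ⟨h1, h2, h3⟩, -⟩ := hG.2 x a b
  rw [dist_eq_one_iff_adj.mpr hab] at h3
  have hba : G.dist b a = 1 := dist_eq_one_iff_adj.mpr hab.symm
  unfold CloserTo
  rcases (by omega : G.dist a m = 0 ∨ G.dist m b = 0) with hm | hm
  · obtain rfl := hG.eq_of_dist_eq_zero hm
    omega
  · obtain rfl := hG.eq_of_dist_eq_zero hm
    omega

lemma dist_eq_of_cross (hG : IsMedianGraph G) (hxx' : G.Adj x x')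
    (hx : CloserTo G a b x) (hx' : CloserTo G b a x') : G.dist x a = G.dist x' b := by
  have h1 := hG.1.dist_triangle (u := x') (v := x) (w := a)
  have h2 := hG.1.dist_triangle (u := x) (v := x') (w := b)
  rw [dist_eq_one_iff_adj.mpr hxx'.symm] at h1
  rw [dist_eq_one_iff_adj.mpr hxx'] at h2
  unfold CloserTo at hx hx'
  omega

/-- The square `x x' w m` is completed by the median `m` of `x`, `w` and `a`. -/
lemma exists_square (hG : IsMedianGraph G) (hab : G.Adj a b) (hxx' : G.Adj x x')
    (hx : CloserTo G a b x) (hx' : CloserTo G b a x') {w : V} (hx'w : G.Adj x' w)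
    (hw : G.dist w b + 1 = G.dist x' b) :
    ∃ m, G.Adj x m ∧ G.Adj m w ∧ CloserTo G a b m ∧ CloserTo G b a w ∧ G.dist x w = 2 := by
  have hcross := hG.dist_eq_of_cross hxx' hx hx'
  have hwB : CloserTo G b a w := by
    have := hG.1.dist_triangle (u := x') (v := w) (w := a)
    rw [dist_eq_one_iff_adj.mpr hx'w] at this
    refine (hG.closerTo_or_closerTo hab w).resolve_left fun hwA => ?_
    unfold CloserTo at *
    omega
  have hxw : G.dist x w = 2 := by
    have hle := hG.1.dist_triangle (u := x) (v := x') (w := w)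
    rw [dist_eq_one_iff_adj.mpr hxx', dist_eq_one_iff_adj.mpr hx'w] at hle
    have hne0 : G.dist x w ≠ 0 := fun h0 => by
      obtain rfl := hG.eq_of_dist_eq_zero h0
      exact hx.not_swap hwB
    have hne1 : G.dist x w ≠ 1 := fun h1 => by
      have htri := hG.closerTo_or_closerTo hxx' w
      have hwx : G.dist w x = 1 := by rw [dist_comm, h1]
      have hwx' : G.dist w x' = 1 := dist_eq_one_iff_adj.mpr hx'w.symm
      unfold CloserTo at htri
      omega
    omega
  obtain ⟨m, ⟨h1, h2, h3⟩, -⟩ := hG.2 x w a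
  have hwm : G.dist w m = G.dist m w := dist_comm
  have hxm : G.dist x m = 1 := by unfold CloserTo at *; omega
  have hmA : CloserTo G a b m := by
    have := hG.1.dist_triangle (u := x) (v := m) (w := b)
    refine (hG.closerTo_or_closerTo hab m).resolve_right fun hmB => ?_
    unfold CloserTo at *
    omega
  exact ⟨m, dist_eq_one_iff_adj.mp hxm, dist_eq_one_iff_adj.mp (by omega), hmA, hwB, hxw⟩

/-- Induction on `d(x', b)`: `exists_square` moves the crossing edge towards `ab`, and if `y`
were closer to `x'` than to `x`, both `x'` and `m` would be medians of `x`, `w` and `y`. -/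
lemma dist_cross (hG : IsMedianGraph G) (hab : G.Adj a b) (hxx' : G.Adj x x')
    (hx : CloserTo G a b x) (hx' : CloserTo G b a x') (hy : CloserTo G a b y) :
    G.dist y x' = G.dist y x + 1 := by
  induction hn : G.dist x' b generalizing x x' with
  | zero =>
    obtain rfl := hG.eq_of_dist_eq_zero hn
    obtain rfl := hG.eq_of_dist_eq_zero ((hG.dist_eq_of_cross hxx' hx hx').trans hn)
    exact hy.symm
  | succ n ih =>
    obtain ⟨w, hx'w, hwb⟩ := hG.1.exists_adj_dist_eq hn
    obtain ⟨m, hxm, hmw, hmA, hwB, hxw⟩ :=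
      hG.exists_square hab hxx' hx hx' hx'w (by omega)
    have hmw' := ih hmw hmA hwB hwb
    refine ((hG.closerTo_or_closerTo hxx' y).resolve_right fun hback => ?_).symm
    have hm := hG.closerTo_or_closerTo hxm y
    have hw := hG.closerTo_or_closerTo hx'w y
    unfold CloserTo at hback hm hw
    have hx'm : x' = m := by
      have hd : G.dist x x' = 1 := dist_eq_one_iff_adj.mpr hxx'
      have hd' : G.dist x' w = 1 := dist_eq_one_iff_adj.mpr hx'w
      have hd'' : G.dist x m = 1 := dist_eq_one_iff_adj.mpr hxm
      have hd''' : G.dist m w = 1 := dist_eq_one_iff_adj.mpr hmw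
      have c1 : G.dist x' y = G.dist y x' := dist_comm
      have c2 : G.dist w y = G.dist y w := dist_comm
      have c3 : G.dist m y = G.dist y m := dist_comm
      have c4 : G.dist x y = G.dist y x := dist_comm
      have c5 : G.dist w x' = G.dist x' w := dist_comm
      have c6 : G.dist w m = G.dist m w := dist_comm
      exact (hG.2 x w y).unique ⟨by omega, by omega, by omega⟩ ⟨by omega, by omega, by omega⟩
    exact hx'.not_swap (hx'm ▸ hmA)

lemma dist_cross' (hG : IsMedianGraph G) (hab : G.Adj a b) (hxx' : G.Adj x x')
    (hx : CloserTo G a b x) (hx' : CloserTo G b a x') (hy : CloserTo G b a y) :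
    G.dist y x = G.dist y x' + 1 :=
  hG.dist_cross hab.symm hxx'.symm hx' hx hy

end IsMedianGraph

def GeodConvex (G : SimpleGraph V) (S : Set V) : Prop :=
  ∀ ⦃x y z : V⦄, x ∈ S → y ∈ S → G.dist x z + G.dist z y = G.dist x y → z ∈ S

lemma GeodConvex.inter {G : SimpleGraph V} {S T : Set V} (hS : GeodConvex G S)
    (hT : GeodConvex G T) : GeodConvex G (S ∩ T) :=
  fun _ _ _ hx hy hz => ⟨hS hx.1 hy.1 hz, hT hx.2 hy.2 hz⟩

/-- The hyperplane dual to the edge `e`. -/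
def thetaClass (G : SimpleGraph V) (e : V × V) : Set (V × V) :=
  {f | G.Adj f.1 f.2 ∧ Theta G e f}

lemma thetaClass_swap (G : SimpleGraph V) (a b : V) :
    thetaClass G (a, b) = thetaClass G (b, a) := by
  ext f
  refine and_congr_right fun _ => ?_
  simp only [Theta]
  constructor <;> intro h <;> omega

lemma mem_thetaClass_self {G : SimpleGraph V} {a b : V} (hab : G.Adj a b) :
    (a, b) ∈ thetaClass G (a, b) := by
  have h : G.dist a b = 1 := dist_eq_one_iff_adj.mpr hab
  have h' : G.dist b a = 1 := dist_eq_one_iff_adj.mpr hab.symm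
  refine ⟨hab, ?_⟩
  simp only [Theta, SimpleGraph.dist_self]
  omega

lemma isHyperplane_thetaClass {G : SimpleGraph V} {a b : V} (hab : G.Adj a b) :
    IsHyperplane G (thetaClass G (a, b)) :=
  ⟨(a, b), hab, rfl⟩

namespace IsHyperplane

variable {G : SimpleGraph V} {h : Set (V × V)} {u v : V}

lemma exists_eq_thetaClass (hh : IsHyperplane G h) :
    ∃ a b, G.Adj a b ∧ h = thetaClass G (a, b) := by
  obtain ⟨⟨a, b⟩, hab, rfl⟩ := hh
  exact ⟨a, b, hab, rfl⟩

lemma adj (hh : IsHyperplane G h) (huv : (u, v) ∈ h) : G.Adj u v := by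
  obtain ⟨e, -, rfl⟩ := hh
  exact huv.1

lemma swap_mem (hh : IsHyperplane G h) (huv : (u, v) ∈ h) : (v, u) ∈ h := by
  obtain ⟨e, -, rfl⟩ := hh
  refine ⟨huv.1.symm, fun heq => huv.2 ?_⟩
  simp only at heq ⊢
  omega

lemma adjTo_iff (hh : IsHyperplane G h) : AdjTo G h v ↔ ∃ w, (v, w) ∈ h := by
  constructor
  · rintro ⟨⟨p, q⟩, hpq, rfl | rfl⟩
    · exact ⟨q, hpq⟩
    · exact ⟨p, hh.swap_mem hpq⟩
  · rintro ⟨w, hvw⟩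
    exact ⟨(v, w), hvw, Or.inl rfl⟩

lemma exists_adjTo (hh : IsHyperplane G h) : ∃ v, AdjTo G h v := by
  obtain ⟨⟨a, b⟩, hab, rfl⟩ := hh
  exact ⟨a, (a, b), mem_thetaClass_self hab, Or.inl rfl⟩

end IsHyperplane

namespace IsMedianGraph

variable {G : SimpleGraph V} {a b c d : V}

lemma geodConvex_closerTo (hG : IsMedianGraph G) (hab : G.Adj a b) :
    GeodConvex G {x | CloserTo G a b x} := by
  intro x y z hx hy hz
  induction hn : G.dist x z using Nat.strong_induction_on generalizing x with
  | _ n ih =>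
    refine (hG.closerTo_or_closerTo hab z).resolve_right fun hzB => ?_
    obtain ⟨n, rfl⟩ : ∃ n', n = n' + 1 := Nat.exists_eq_succ_of_ne_zero fun h0 => by
      obtain rfl := hG.eq_of_dist_eq_zero (hn.trans h0)
      exact CloserTo.not_swap hx hzB
    obtain ⟨x₁, hxx₁, hx₁z⟩ := hG.1.exists_adj_dist_eq hn
    have h1 := hG.1.dist_triangle (u := x₁) (v := z) (w := y)
    have h2 := hG.1.dist_triangle (u := x) (v := x₁) (w := y)
    rw [dist_eq_one_iff_adj.mpr hxx₁] at h2
    rcases hG.closerTo_or_closerTo hab x₁ with hx₁ | hx₁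
    · exact (ih n (by omega) hx₁ (by omega) hx₁z).not_swap hzB
    · have hcross := hG.dist_cross hab hxx₁ hx hx₁ hy
      rw [dist_comm (u := y), dist_comm (u := y)] at hcross
      omega

lemma theta_iff (hG : IsMedianGraph G) (hab : G.Adj a b) (u v : V) :
    Theta G (a, b) (u, v) ↔
      CloserTo G a b u ∧ CloserTo G b a v ∨ CloserTo G b a u ∧ CloserTo G a b v := by
  have hu := hG.closerTo_or_closerTo hab u
  have hv := hG.closerTo_or_closerTo hab v
  have c1 : G.dist a u = G.dist u a := dist_comm
  have c2 : G.dist b u = G.dist u b := dist_comm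
  have c3 : G.dist a v = G.dist v a := dist_comm
  have c4 : G.dist b v = G.dist v b := dist_comm
  simp only [Theta, CloserTo] at *
  omega

lemma mem_thetaClass_iff (hG : IsMedianGraph G) (hab : G.Adj a b) (u v : V) :
    (u, v) ∈ thetaClass G (a, b) ↔ G.Adj u v ∧
      (CloserTo G a b u ∧ CloserTo G b a v ∨ CloserTo G b a u ∧ CloserTo G a b v) :=
  and_congr_right fun _ => hG.theta_iff hab u v

lemma closerTo_iff_of_cross (hG : IsMedianGraph G) (hab : G.Adj a b) (hcd : G.Adj c d)
    (hc : CloserTo G a b c) (hd : CloserTo G b a d) (x : V) :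
    CloserTo G c d x ↔ CloserTo G a b x := by
  constructor
  · intro hx
    refine (hG.closerTo_or_closerTo hab x).resolve_right fun hxB => ?_
    have := hG.dist_cross' hab hcd hc hd hxB
    unfold CloserTo at hx
    omega
  · exact fun hx => (hG.dist_cross hab hcd hc hd hx).symm

lemma thetaClass_eq_of_mem (hG : IsMedianGraph G) (hab : G.Adj a b)
    (hcd : (c, d) ∈ thetaClass G (a, b)) : thetaClass G (c, d) = thetaClass G (a, b) := by
  ext ⟨u, v⟩
  rw [hG.mem_thetaClass_iff hcd.1, hG.mem_thetaClass_iff hab]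
  rcases (hG.mem_thetaClass_iff hab c d).mp hcd with ⟨hadj, ⟨hc, hd⟩ | ⟨hc, hd⟩⟩
  · simp only [hG.closerTo_iff_of_cross hab hadj hc hd,
      hG.closerTo_iff_of_cross hab.symm hadj.symm hd hc]
  · simp only [hG.closerTo_iff_of_cross hab.symm hadj hc hd,
      hG.closerTo_iff_of_cross hab hadj.symm hd hc, or_comm]

lemma _root_.IsHyperplane.eq_thetaClass (hG : IsMedianGraph G) {h : Set (V × V)}
    (hh : IsHyperplane G h) {u v : V} (huv : (u, v) ∈ h) : h = thetaClass G (u, v) := by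
  obtain ⟨a, b, hab, rfl⟩ := hh.exists_eq_thetaClass
  exact (hG.thetaClass_eq_of_mem hab huv).symm

end IsMedianGraph

namespace IsMedianGraph

variable {G : SimpleGraph V} {a b x y z : V}

lemma adjTo_thetaClass_iff (hG : IsMedianGraph G) (hab : G.Adj a b) (z : V) :
    AdjTo G (thetaClass G (a, b)) z ↔ ∃ w, G.Adj z w ∧
      (CloserTo G a b z ∧ CloserTo G b a w ∨ CloserTo G b a z ∧ CloserTo G a b w) := by
  rw [(isHyperplane_thetaClass hab).adjTo_iff]
  exact exists_congr fun w => hG.mem_thetaClass_iff hab z w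

lemma exists_adj_closerTo_of_le (hG : IsMedianGraph G) (hab : G.Adj a b)
    (hx : CloserTo G b a x) (hy : CloserTo G b a y) (hz : CloserTo G a b z)
    (hxzy : G.dist x z + G.dist z y ≤ G.dist x y + 2) : ∃ m, G.Adj z m ∧ CloserTo G b a m := by
  obtain ⟨m, ⟨h1, h2, h3⟩, -⟩ := hG.2 x y z
  have hm : CloserTo G b a m := hG.geodConvex_closerTo hab.symm hx hy h1
  have hmz : G.dist m z ≠ 0 := fun h0 => by
    obtain rfl := hG.eq_of_dist_eq_zero h0
    exact hz.not_swap hm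
  have c1 : G.dist z y = G.dist y z := dist_comm
  have c2 : G.dist z m = G.dist m z := dist_comm
  have c3 : G.dist y m = G.dist m y := dist_comm
  exact ⟨m, dist_eq_one_iff_adj.mp (by omega), hm⟩

lemma adjTo_thetaClass_of_between (hG : IsMedianGraph G) (hab : G.Adj a b)
    (hx : AdjTo G (thetaClass G (a, b)) x) (hxA : CloserTo G a b x)
    (hy : AdjTo G (thetaClass G (a, b)) y) (hz : CloserTo G a b z)
    (hxzy : G.dist x z + G.dist z y = G.dist x y) : AdjTo G (thetaClass G (a, b)) z := by
  obtain ⟨x', hxx', hx'⟩ : ∃ x', G.Adj x x' ∧ CloserTo G b a x' := by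
    obtain ⟨x', hxx', ⟨-, hx'⟩ | ⟨hxB, -⟩⟩ := (hG.adjTo_thetaClass_iff hab x).mp hx
    exacts [⟨x', hxx', hx'⟩, (hxA.not_swap hxB).elim]
  have hzx' := hG.dist_cross hab hxx' hxA hx' hz
  have c1 : G.dist z x = G.dist x z := dist_comm
  have c2 : G.dist z x' = G.dist x' z := dist_comm
  have c3 : G.dist y x = G.dist x y := dist_comm
  obtain ⟨m, hzm, hm⟩ : ∃ m, G.Adj z m ∧ CloserTo G b a m := by
    obtain ⟨y', hyy', ⟨hyA, hy'⟩ | ⟨hyB, -⟩⟩ := (hG.adjTo_thetaClass_iff hab y).mp hy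
    · have hzy' := hG.dist_cross hab hyy' hyA hy' hz
      have hy'x := hG.dist_cross' hab hxx' hxA hx' hy'
      have hxy' := hG.dist_cross hab hyy' hyA hy' hxA
      have c4 : G.dist z y = G.dist y z := dist_comm
      have c5 : G.dist z y' = G.dist y' z := dist_comm
      have c6 : G.dist y' x = G.dist x y' := dist_comm
      have c7 : G.dist y' x' = G.dist x' y' := dist_comm
      exact hG.exists_adj_closerTo_of_le hab hx' hy' hz (by omega)
    · have hyx := hG.dist_cross' hab hxx' hxA hx' hyB
      have c4 : G.dist y x' = G.dist x' y := dist_comm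
      exact hG.exists_adj_closerTo_of_le hab hx' hyB hz (by omega)
  exact (hG.adjTo_thetaClass_iff hab z).mpr ⟨m, hzm, Or.inl ⟨hz, hm⟩⟩

lemma _root_.IsHyperplane.geodConvex_adjTo (hG : IsMedianGraph G) {h : Set (V × V)}
    (hh : IsHyperplane G h) : GeodConvex G {v | AdjTo G h v} := by
  obtain ⟨a, b, hab, rfl⟩ := hh.exists_eq_thetaClass
  clear hh
  intro x y z hx hy hxzy
  wlog hz : CloserTo G a b z generalizing a b
  · rw [Set.mem_ofPred_eq, thetaClass_swap] at *
    exact this b a hab.symm hx hy ((hG.closerTo_or_closerTo hab z).resolve_left hz)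
  by_cases hxA : CloserTo G a b x
  · exact hG.adjTo_thetaClass_of_between hab hx hxA hy hz hxzy
  by_cases hyA : CloserTo G a b y
  · refine hG.adjTo_thetaClass_of_between hab hy hyA hx hz ?_
    have c1 : G.dist y z = G.dist z y := dist_comm
    have c2 : G.dist z x = G.dist x z := dist_comm
    have c3 : G.dist y x = G.dist x y := dist_comm
    omega
  have hzB := hG.geodConvex_closerTo hab.symm ((hG.closerTo_or_closerTo hab x).resolve_left hxA)
    ((hG.closerTo_or_closerTo hab y).resolve_left hyA) hxzy
  exact (hz.not_swap hzB).elim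

/-- Helly property of convex sets, relativised to a convex `C` so that the induction step can
replace `C` by `C ∩ A k`; the median of three witnesses lies in all four sets. -/
lemma exists_mem_of_pairwise_inter {ι : Type*} (hG : IsMedianGraph G) {C : Set V}
    (hC : GeodConvex G C) (hCne : C.Nonempty) (A : ι → Set V) (s : Finset ι)
    (hA : ∀ i ∈ s, GeodConvex G (A i)) (hpair : ∀ i ∈ s, ∀ j ∈ s, (A i ∩ A j ∩ C).Nonempty) :
    ∃ p ∈ C, ∀ i ∈ s, p ∈ A i := by
  classical
  induction s using Finset.induction_on generalizing C with
  | empty =>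
    obtain ⟨p, hp⟩ := hCne
    exact ⟨p, hp, by simp⟩
  | insert k s hk ih =>
    simp only [Finset.mem_insert, forall_eq_or_imp] at hA hpair ⊢
    obtain ⟨p, ⟨hpk, hpC⟩, hps⟩ := ih (hA.1.inter hC) (by simpa using hpair.1.1) hA.2
      fun i hi j hj => by
        obtain ⟨p, ⟨hpi, hpj⟩, hpC⟩ := hpair.2 i hi |>.2 j hj
        obtain ⟨q, ⟨hqi, hqk⟩, hqC⟩ := hpair.2 i hi |>.1
        obtain ⟨r, ⟨hrj, hrk⟩, hrC⟩ := hpair.2 j hj |>.1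
        obtain ⟨m, ⟨h1, h2, h3⟩, -⟩ := hG.2 p q r
        exact ⟨m, ⟨hA.2 i hi hpi hqi h1, hA.2 j hj hpj hrj h2⟩, hA.1 hqk hrk h3, hC hpC hqC h1⟩
    exact ⟨p, hpC, hpk, hps⟩

lemma transverse_thetaClass (hG : IsMedianGraph G) {v v₁ w : V} (hvv₁ : G.Adj v v₁)
    (hvw : G.Adj v w) (hne : thetaClass G (v, w) ≠ thetaClass G (v, v₁))
    (hv₁ : AdjTo G (thetaClass G (v, w)) v₁) :
    Transverse G (thetaClass G (v, v₁)) (thetaClass G (v, w)) := by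
  have hvv : G.dist v v₁ = 1 := dist_eq_one_iff_adj.mpr hvv₁
  have hvv' : G.dist v₁ v = 1 := dist_eq_one_iff_adj.mpr hvv₁.symm
  have hvw' : G.dist v w = 1 := dist_eq_one_iff_adj.mpr hvw
  have hwv : G.dist w v = 1 := dist_eq_one_iff_adj.mpr hvw.symm
  have hvA : CloserTo G v w v := by simp [CloserTo, hvw']
  have hwB : CloserTo G w v w := by simp [CloserTo, hwv]
  have hv₁A : CloserTo G v w v₁ := (hG.closerTo_or_closerTo hvw v₁).resolve_right fun hv₁B =>
    hne (hG.thetaClass_eq_of_mem hvw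
      ((hG.mem_thetaClass_iff hvw v v₁).mpr ⟨hvv₁, Or.inl ⟨hvA, hv₁B⟩⟩)).symm
  obtain ⟨w₁, hv₁w₁, hw₁⟩ : ∃ w₁, G.Adj v₁ w₁ ∧ CloserTo G w v w₁ := by
    obtain ⟨w₁, h, ⟨-, hw₁⟩ | ⟨hB, -⟩⟩ := (hG.adjTo_thetaClass_iff hvw v₁).mp hv₁
    exacts [⟨w₁, h, hw₁⟩, (hv₁A.not_swap hB).elim]
  have h1 := hG.dist_cross hvw hv₁w₁ hv₁A hw₁ hvA
  have h2 := hG.dist_cross' hvw hv₁w₁ hv₁A hw₁ hwB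
  have h3 := hG.dist_cross hvw hvw hvA hwB hv₁A
  have h4 : G.dist v₁ w₁ = 1 := dist_eq_one_iff_adj.mpr hv₁w₁
  have c : G.dist w v₁ = G.dist v₁ w := dist_comm
  have hww₁ : G.Adj w w₁ := dist_eq_one_iff_adj.mp (by omega)
  refine ⟨v, v₁, w, w₁, mem_thetaClass_self hvv₁, ⟨hww₁, ?_⟩, mem_thetaClass_self hvw,
    (hG.mem_thetaClass_iff hvw v₁ w₁).mpr ⟨hv₁w₁, Or.inl ⟨hv₁A, hw₁⟩⟩, hvv₁, hww₁, hvw, hv₁w₁⟩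
  simp only [Theta]
  omega

/-- If `v ≠ u`, carriers being convex, the hyperplane dual to the first edge of a geodesic from
`v` to `u` is transverse to every other hyperplane at `v`, so `v` would be extremal. -/
lemma eq_of_wv_subset (hG : IsMedianGraph G) (hext : ∀ v : V, ¬ LinkIsCone G v) {u v : V}
    (hsub : Wv G v ⊆ Wv G u) : v = u := by
  by_contra hne
  obtain ⟨n, hn⟩ : ∃ n, G.dist v u = n + 1 :=
    Nat.exists_eq_succ_of_ne_zero fun h0 => hne (hG.eq_of_dist_eq_zero h0)
  obtain ⟨v₁, hvv₁, hv₁u⟩ := hG.1.exists_adj_dist_eq hn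
  refine hext v ⟨thetaClass G (v, v₁),
    ⟨isHyperplane_thetaClass hvv₁, (v, v₁), mem_thetaClass_self hvv₁, Or.inl rfl⟩, ?_⟩
  rintro h ⟨hh, hhv⟩ hne'
  obtain ⟨w, hvw⟩ := hh.adjTo_iff.mp hhv
  have hv₁ : AdjTo G h v₁ := hh.geodConvex_adjTo hG hhv (hsub ⟨hh, hhv⟩).2
    (by rw [dist_eq_one_iff_adj.mpr hvv₁]; omega)
  rw [hh.eq_thetaClass hG hvw] at hne' hv₁ ⊢
  exact hG.transverse_thetaClass hvv₁ (hh.adj hvw) hne' hv₁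

end IsMedianGraph

/-- `Wv G v` as a set of vertices of the contact graph. -/
def hypAt (G : SimpleGraph V) (v : V) : Set (Hyp G) :=
  {h | AdjTo G h.1 v}

lemma isClique_image_hypAt {G : SimpleGraph V} (ψ : contactGraph G ≃g contactGraph G) (v : V) :
    (contactGraph G).IsClique (ψ '' hypAt G v) := by
  rintro _ ⟨h, hh, rfl⟩ _ ⟨k, hk, rfl⟩ hne
  exact ψ.map_adj_iff.mpr ⟨fun e => hne (e ▸ rfl), v, hh, hk⟩

lemma adjTo_hmap_iff {G : SimpleGraph V} (φ : G ≃g G) (h : Set (V × V)) (x : V) :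
    AdjTo G (hmap G φ h) (φ x) ↔ AdjTo G h x := by
  constructor
  · rintro ⟨_, ⟨e, he, rfl⟩, hx | hx⟩
    exacts [⟨e, he, Or.inl (φ.injective hx)⟩, ⟨e, he, Or.inr (φ.injective hx)⟩]
  · rintro ⟨e, he, hx | hx⟩
    exacts [⟨_, ⟨e, he, rfl⟩, Or.inl (congrArg φ hx)⟩, ⟨_, ⟨e, he, rfl⟩, Or.inr (congrArg φ hx)⟩]

lemma image_hypAt_of_forall_eq_hmap {G : SimpleGraph V} {φ : G ≃g G}
    {ψ : contactGraph G ≃g contactGraph G} (hreal : ∀ h : Hyp G, (ψ h).1 = hmap G φ h.1)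
    (v : V) : ψ '' hypAt G v = hypAt G (φ v) := by
  ext k
  constructor
  · rintro ⟨h, hh, rfl⟩
    show AdjTo G (ψ h).1 (φ v)
    rw [hreal]
    exact (adjTo_hmap_iff φ _ v).mpr hh
  · intro hk
    refine ⟨ψ.symm k, ?_, ψ.apply_symm_apply k⟩
    show AdjTo G (ψ.symm k).1 v
    rw [← adjTo_hmap_iff φ, ← hreal, ψ.apply_symm_apply]
    exact hk

namespace IsMedianGraph

variable {G : SimpleGraph V}

lemma eq_of_hypAt_subset (hG : IsMedianGraph G) (hext : ∀ v : V, ¬ LinkIsCone G v) {u v : V}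
    (hsub : hypAt G v ⊆ hypAt G u) : v = u :=
  hG.eq_of_wv_subset hext fun h ⟨hh, hv⟩ => ⟨hh, hsub (show (⟨h, hh⟩ : Hyp G) ∈ hypAt G v from hv)⟩

lemma hypAt_injective (hG : IsMedianGraph G) (hext : ∀ v : V, ¬ LinkIsCone G v) :
    Function.Injective (hypAt G) :=
  fun _ _ h => hG.eq_of_hypAt_subset hext h.le

lemma exists_subset_hypAt_of_isClique_of_finite (hG : IsMedianGraph G) [Nonempty V]
    {S : Set (Hyp G)} (hS : (contactGraph G).IsClique S) (hfin : S.Finite) :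
    ∃ u, S ⊆ hypAt G u := by
  have hpair : ∀ h ∈ hfin.toFinset, ∀ k ∈ hfin.toFinset,
      ({v | AdjTo G h.1 v} ∩ {v | AdjTo G k.1 v} ∩ Set.univ).Nonempty := by
    intro h hh k hk
    by_cases hne : h = k
    · obtain ⟨v, hv⟩ := h.2.exists_adjTo
      exact ⟨v, ⟨hv, hne ▸ hv⟩, trivial⟩
    · obtain ⟨-, v, hv, hv'⟩ := hS (hfin.mem_toFinset.mp hh) (hfin.mem_toFinset.mp hk) hne
      exact ⟨v, ⟨hv, hv'⟩, trivial⟩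
  obtain ⟨u, -, hu⟩ := hG.exists_mem_of_pairwise_inter (fun _ _ _ _ _ _ => trivial)
    Set.univ_nonempty _ _ (fun h _ => h.2.geodConvex_adjTo hG) hpair
  exact ⟨u, fun h hh => hu h (hfin.mem_toFinset.mpr hh)⟩

lemma ncard_le_of_subset_hypAt (hG : IsMedianGraph G) {S : Set (Hyp G)} {u : V}
    (hu : S ⊆ hypAt G u) (hfin : (G.neighborSet u).Finite) :
    S.ncard ≤ (G.neighborSet u).ncard := by
  have himage : Subtype.val '' S ⊆ (fun w => thetaClass G (u, w)) '' G.neighborSet u := by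
    rintro _ ⟨h, hh, rfl⟩
    obtain ⟨w, huw⟩ := h.2.adjTo_iff.mp (hu hh)
    exact ⟨w, h.2.adj huw, (h.2.eq_thetaClass hG huw).symm⟩
  calc S.ncard = (Subtype.val '' S).ncard :=
        (Set.ncard_image_of_injective _ Subtype.val_injective).symm
    _ ≤ _ := Set.ncard_le_ncard himage (hfin.image _)
    _ ≤ _ := Set.ncard_image_le hfin

/-- A clique is finite: otherwise it has a finite subclique of size `N + 1`, whose common
vertex has more than `N` neighbours. -/
lemma exists_subset_hypAt_of_isClique (hG : IsMedianGraph G) (hULF : UnifLocFinite G)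
    [Nonempty V] {S : Set (Hyp G)} (hS : (contactGraph G).IsClique S) :
    ∃ u, S ⊆ hypAt G u := by
  obtain ⟨N, hN⟩ := hULF
  refine hG.exists_subset_hypAt_of_isClique_of_finite hS (by_contra fun hinf => ?_)
  obtain ⟨t, htS, htfin, htcard⟩ := Set.Infinite.exists_subset_ncard_eq hinf (N + 1)
  obtain ⟨u, hu⟩ := hG.exists_subset_hypAt_of_isClique_of_finite (hS.subset htS) htfin
  have := hG.ncard_le_of_subset_hypAt hu (hN u).1
  have := (hN u).2
  omega

lemma exists_image_hypAt_eq (hG : IsMedianGraph G) (hULF : UnifLocFinite G)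
    (hext : ∀ v : V, ¬ LinkIsCone G v) (ψ : contactGraph G ≃g contactGraph G) (v : V) :
    ∃ u, ψ '' hypAt G v = hypAt G u := by
  have : Nonempty V := ⟨v⟩
  obtain ⟨u, hu⟩ := hG.exists_subset_hypAt_of_isClique hULF (isClique_image_hypAt ψ v)
  obtain ⟨t, ht⟩ := hG.exists_subset_hypAt_of_isClique hULF (isClique_image_hypAt ψ.symm u)
  obtain rfl : v = t := hG.eq_of_hypAt_subset hext fun h hh => ht ⟨ψ h, hu ⟨h, hh, rfl⟩, by simp⟩
  exact ⟨u, hu.antisymm fun h hh => ⟨ψ.symm h, ht ⟨h, hh, rfl⟩, by simp⟩⟩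

lemma exists_perm_image_hypAt (hG : IsMedianGraph G) (hULF : UnifLocFinite G)
    (hext : ∀ v : V, ¬ LinkIsCone G v) :
    ∃ ρ : (contactGraph G ≃g contactGraph G) → Equiv.Perm V,
      ∀ (ψ : contactGraph G ≃g contactGraph G) (v : V), ψ '' hypAt G v = hypAt G (ρ ψ v) := by
  choose f hf using hG.exists_image_hypAt_eq hULF hext
  have hinv : ∀ ψ v, f ψ.symm (f ψ v) = v := fun ψ v =>
    hG.hypAt_injective hext (by rw [← hf, ← hf, Set.image_image]; simp)
  exact ⟨fun ψ => ⟨f ψ, f ψ.symm, hinv ψ, hinv ψ.symm⟩, hf⟩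

lemma eq_of_forall_hmap_eq (hG : IsMedianGraph G) (hext : ∀ v : V, ¬ LinkIsCone G v)
    {φ ψ : G ≃g G} (hsame : ∀ h, IsHyperplane G h → hmap G φ h = hmap G ψ h) : φ = ψ := by
  ext v
  have hfix : hypAt G (ψ.symm (φ v)) = hypAt G v := by
    ext k
    show AdjTo G k.1 (ψ.symm (φ v)) ↔ AdjTo G k.1 v
    rw [← adjTo_hmap_iff ψ, ψ.apply_symm_apply, ← hsame k.1 k.2, adjTo_hmap_iff]
  exact (ψ.symm_apply_eq.mp (hG.hypAt_injective hext hfix))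

end IsMedianGraph

/-- for `X` uniformly locally finite with no extremal vertices, the natural
map `ι : Aut(X) → Aut(𝒞(X))` is injective, and there is a homomorphism
`ρ : Aut(𝒞(X)) → Sym(X⁰)` with `ρ ∘ ι = id`. -/
theorem iota_injective_and_rho (G : SimpleGraph V) (hG : IsMedianGraph G)
    (hULF : UnifLocFinite G) (hext : ∀ v : V, ¬ LinkIsCone G v) :
    (∀ φ ψ : G ≃g G, (∀ h, IsHyperplane G h → hmap G φ h = hmap G ψ h) → φ = ψ) ∧
    ∃ ρ : (contactGraph G ≃g contactGraph G) → Equiv.Perm V,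
      (∀ ψ₁ ψ₂ : contactGraph G ≃g contactGraph G, ρ (ψ₁.trans ψ₂) = ρ ψ₂ * ρ ψ₁) ∧
      (∀ (φ : G ≃g G) (ψ : contactGraph G ≃g contactGraph G),
        (∀ h : Hyp G, (ψ h).1 = hmap G φ h.1) → ∀ v : V, ρ ψ v = φ v) := by
  obtain ⟨ρ, hρ⟩ := hG.exists_perm_image_hypAt hULF hext
  refine ⟨fun φ ψ => hG.eq_of_forall_hmap_eq hext, ρ, fun ψ₁ ψ₂ => ?_, fun φ ψ hreal v => ?_⟩
  · ext v
    apply hG.hypAt_injective hext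
    rw [← hρ, Equiv.Perm.mul_apply, ← hρ, ← hρ, Set.image_image]
    rfl
  · exact hG.hypAt_injective hext ((hρ ψ v).symm.trans (image_hypAt_of_forall_eq_hmap hreal v))
end

section
/- Let X be a uniformly locally finite CAT(0) cube complex with no extremal vertices, and let ρ : Aut(C(X)) → Sym(X^(0)) be the homomorphism induced by the action on maximal cliques. Then the kernel of ρ equals the subgroup N of permutations of the hyperplane set that preserve adjacency in C(X) and leave each set I⁰(w) invariant; moreover N is isomorphic to the direct product over the partition classes I⁰(w) of the symmetric groups Sym(I⁰(w)). In particular, ρ is injective if and only if every I⁰(w) is a singleton. -/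
open SimpleGraph

variable {V : Type*}

/-!
If `W_v = W_u` with `u ≠ v`, let `v v₁` be the first edge of a geodesic from `v` to `u` and `H`
its hyperplane. Any other hyperplane at `v` also meets `u`, so it has an edge at `v` on the side
of `v` and a parallel edge at `u` on the other side of `H`; the ladder of squares between these
two edges crosses `H`, so `H` is transverse to every other hyperplane at `v` and `v` is
extremal. Hence `v ↦ W_v` is injective, and `ρ(ψ) = 1` exactly when `ψ` fixes every set of
hyperplanes at a vertex, i.e. moves each hyperplane inside its class `I⁰(w)`. Contact only depends
on carriers, so every class-preserving permutation is an automorphism of the contact graph, and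
these permutations form the product of the symmetric groups of the classes.
-/

variable {G : SimpleGraph V}

namespace IsMedianGraph

lemma dist_eq_succ_or_of_adj (hG : IsMedianGraph G) {p q : V} (hpq : G.Adj p q) (x : V) :
    G.dist x q = G.dist x p + 1 ∨ G.dist x p = G.dist x q + 1 := by
  -- the median of `x`, `p`, `q` is `p` or `q`
  obtain ⟨m, ⟨hxp, hxq, hpq'⟩, -⟩ := hG.2 x p q
  have h1 : G.dist p q = 1 := dist_eq_one_iff_adj.mpr hpq
  rcases (by omega : G.dist p m = 0 ∨ G.dist m q = 0) with h | h
  · obtain rfl := hG.1.dist_eq_zero_iff.mp h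
    omega
  · obtain rfl := hG.1.dist_eq_zero_iff.mp h
    rw [dist_comm] at h1
    omega

lemma exists_adj_dist_succ (hG : IsMedianGraph G) {a b : V} (h : a ≠ b) :
    ∃ c, G.Adj a c ∧ G.dist c b + 1 = G.dist a b := by
  obtain ⟨p, hp⟩ := hG.1.exists_walk_length_eq_dist a b
  cases p with
  | nil => exact absurd rfl h
  | @cons _ c _ hac q =>
    refine ⟨c, hac, le_antisymm ?_ ?_⟩
    · simpa [← hp] using dist_le q
    · have : G.dist a b ≤ G.dist a c + G.dist c b := hG.1.dist_triangle
      rw [dist_eq_one_iff_adj.mpr hac] at this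
      omega

end IsMedianGraph

def halfspace (G : SimpleGraph V) (p q : V) : Set V := {x | G.dist x p < G.dist x q}

lemma left_mem_halfspace {p q : V} (hpq : G.Adj p q) : p ∈ halfspace G p q := by
  simp [halfspace, dist_eq_one_iff_adj.mpr hpq]

lemma right_notMem_halfspace (p q : V) : q ∉ halfspace G p q := by
  simp [halfspace]

lemma IsMedianGraph.halfspace_swap (hG : IsMedianGraph G) {p q : V} (hpq : G.Adj p q) :
    halfspace G q p = (halfspace G p q)ᶜ := by
  ext x
  have := hG.dist_eq_succ_or_of_adj hpq x
  simp only [halfspace, Set.mem_ofPred_eq, Set.mem_compl_iff, not_lt]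
  omega

lemma IsMedianGraph.theta_iff_s10 (hG : IsMedianGraph G) {e : V × V} (he : G.Adj e.1 e.2)
    (f : V × V) :
    Theta G e f ↔ (f.1 ∈ halfspace G e.1 e.2 ↔ f.2 ∉ halfspace G e.1 e.2) := by
  have h₁ := hG.dist_eq_succ_or_of_adj he f.1
  have h₂ := hG.dist_eq_succ_or_of_adj he f.2
  simp only [Theta, halfspace, Set.mem_ofPred_eq, dist_comm (u := e.1), dist_comm (u := e.2)]
  omega

/-- The edges `(a, a')` and `(b, b')` are opposite rungs of a ladder of height `m`. -/
structure IsLadder (G : SimpleGraph V) (m : ℕ) (a a' b b' : V) : Prop where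
  adj : G.Adj a a'
  adj' : G.Adj b b'
  dist_eq : G.dist a b = m
  dist_eq' : G.dist a' b' = m
  dist_cross : G.dist a b' = m + 1
  dist_cross' : G.dist a' b = m + 1

namespace IsLadder

variable {m : ℕ} {a a' b b' : V}

lemma swap (h : IsLadder G m a a' b b') : IsLadder G m a' a b' b :=
  ⟨h.adj.symm, h.adj'.symm, h.dist_eq', h.dist_eq, h.dist_cross', h.dist_cross⟩

lemma exists_split (hG : IsMedianGraph G) (h : IsLadder G (m + 1) a a' b b') :
    ∃ c c', IsLadder G m a a' c c' ∧ IsLadder G 1 c c' b b' := by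
  have tri (p q r : V) : G.dist p r ≤ G.dist p q + G.dist q r := hG.1.dist_triangle
  have hab := h.dist_eq
  have ha'b' := h.dist_eq'
  have haa' := dist_eq_one_iff_adj.mpr h.adj.symm
  have hbb' := dist_eq_one_iff_adj.mpr h.adj'
  -- `c` is the neighbour of `b` on a geodesic to `a`, and `c'` the median of `a'`, `c`, `b'`
  obtain ⟨c, hbc, hcb⟩ := hG.exists_adj_dist_succ (a := b) (b := a) (by rintro rfl; simp at hab)
  have hcb₁ := dist_eq_one_iff_adj.mpr hbc.symm
  rw [dist_comm (u := c), dist_comm (u := b)] at hcb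
  have hac : G.dist a c = m := by omega
  have ha'c : G.dist a' c = m + 1 := by
    have := tri a' a c; have := tri a' c b; have := h.dist_cross'; omega
  have hcb' : G.dist c b' = 2 := by
    have := tri a c b'; have := tri c b b'; have := h.dist_cross; omega
  obtain ⟨c', ⟨h₁, h₂, h₃⟩, -⟩ := hG.2 a' c b'
  rw [dist_comm (u := c')] at h₁
  have hcc' : G.dist c c' = 1 := by omega
  have ha'c' : G.dist a' c' = m := by omega
  have hac' : G.dist a c' = m + 1 := by
    have := tri a c c'; have := tri a c' b'; have := h.dist_cross; omega
  have hc'b : G.dist c' b = 2 := by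
    have := tri c' c b; have := tri a' c' b; have := h.dist_cross'
    have := dist_comm (G := G) (u := c') (v := c); omega
  have hadj : G.Adj c c' := dist_eq_one_iff_adj.mp hcc'
  exact ⟨c, c', ⟨h.adj, hadj, hac, ha'c', hac', ha'c⟩,
    ⟨hadj, h.adj', hcb₁, by omega, hcb', hc'b⟩⟩

/-- In a square whose halfspaces disagree at `x`, both `a` and `b'` are medians of
`x, a', b`, so they coincide. -/
lemma halfspace_subset_of_square (hG : IsMedianGraph G) (h : IsLadder G 1 a a' b b') :
    halfspace G a a' ⊆ halfspace G b b' := by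
  intro x hx
  by_contra hx'
  simp only [halfspace, Set.mem_ofPred_eq] at hx hx'
  have hab : G.Adj a b := dist_eq_one_iff_adj.mp h.dist_eq
  have ha'b' : G.Adj a' b' := dist_eq_one_iff_adj.mp h.dist_eq'
  have := hG.dist_eq_succ_or_of_adj h.adj x
  have := hG.dist_eq_succ_or_of_adj h.adj' x
  have := hG.dist_eq_succ_or_of_adj hab x
  have := hG.dist_eq_succ_or_of_adj ha'b' x
  have := h.dist_cross'
  have := dist_eq_one_iff_adj.mpr h.adj
  have := dist_eq_one_iff_adj.mpr h.adj.symm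
  have := dist_eq_one_iff_adj.mpr h.adj'.symm
  have := dist_eq_one_iff_adj.mpr hab
  have := dist_eq_one_iff_adj.mpr ha'b'
  have := dist_eq_one_iff_adj.mpr ha'b'.symm
  obtain ⟨_, -, hmed⟩ := hG.2 x a' b
  have hab' : a = b' :=
    (hmed a ⟨by omega, by omega, by omega⟩).trans (hmed b' ⟨by omega, by omega, by omega⟩).symm
  simpa [hab'] using h.dist_cross

lemma halfspace_subset (hG : IsMedianGraph G) (h : IsLadder G m a a' b b') :
    halfspace G a a' ⊆ halfspace G b b' := by
  induction m generalizing b b' with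
  | zero =>
    obtain rfl := hG.1.dist_eq_zero_iff.mp h.dist_eq
    obtain rfl := hG.1.dist_eq_zero_iff.mp h.dist_eq'
    rfl
  | succ m ih =>
    obtain ⟨c, c', hac, hcb⟩ := h.exists_split hG
    exact (ih hac).trans (hcb.halfspace_subset_of_square hG)

lemma halfspace_eq (hG : IsMedianGraph G) (h : IsLadder G m a a' b b') :
    halfspace G a a' = halfspace G b b' := by
  refine (h.halfspace_subset hG).antisymm ?_
  have := h.swap.halfspace_subset hG
  rwa [hG.halfspace_swap h.adj, hG.halfspace_swap h.adj', Set.compl_subset_compl] at this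

end IsLadder

lemma IsMedianGraph.isLadder_of_theta (hG : IsMedianGraph G) {p q r s : V} (hpq : G.Adj p q)
    (hrs : G.Adj r s) (hT : Theta G (p, q) (r, s)) :
    IsLadder G (G.dist p r) p q r s ∨ IsLadder G (G.dist p s) p q s r := by
  have := hG.dist_eq_succ_or_of_adj hpq r
  have := hG.dist_eq_succ_or_of_adj hpq s
  have := hG.dist_eq_succ_or_of_adj hrs p
  have := hG.dist_eq_succ_or_of_adj hrs q
  have := dist_comm (G := G) (u := p) (v := r)
  have := dist_comm (G := G) (u := p) (v := s)
  have := dist_comm (G := G) (u := q) (v := r)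
  have := dist_comm (G := G) (u := q) (v := s)
  dsimp only [Theta] at hT
  by_cases hr : G.dist p r < G.dist q r
  · exact .inl ⟨hpq, hrs, rfl, by omega, by omega, by omega⟩
  · exact .inr ⟨hpq, hrs.symm, rfl, by omega, by omega, by omega⟩

lemma IsMedianGraph.halfspace_eq_or_eq_compl_of_theta (hG : IsMedianGraph G) {p q r s : V}
    (hpq : G.Adj p q) (hrs : G.Adj r s) (hT : Theta G (p, q) (r, s)) :
    halfspace G p q = halfspace G r s ∨ halfspace G p q = (halfspace G r s)ᶜ := by
  rcases hG.isLadder_of_theta hpq hrs hT with h | h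
  · exact .inl (h.halfspace_eq hG)
  · exact .inr ((h.halfspace_eq hG).trans (hG.halfspace_swap hrs))

def hyperplane (G : SimpleGraph V) (e : V × V) : Set (V × V) :=
  {f | G.Adj f.1 f.2 ∧ Theta G e f}

lemma mem_hyperplane_self {e : V × V} (he : G.Adj e.1 e.2) : e ∈ hyperplane G e := by
  refine ⟨he, ?_⟩
  simp [Theta, dist_eq_one_iff_adj.mpr he, dist_eq_one_iff_adj.mpr he.symm]

lemma swap_mem_hyperplane {e : V × V} {r s : V} (h : (r, s) ∈ hyperplane G e) :
    (s, r) ∈ hyperplane G e := by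
  refine ⟨h.1.symm, ?_⟩
  have := h.2
  dsimp only [Theta] at *
  omega

lemma exists_mem_hyperplane_of_adjTo {e : V × V} {v : V} (h : AdjTo G (hyperplane G e) v) :
    ∃ w, (v, w) ∈ hyperplane G e := by
  obtain ⟨⟨p, q⟩, hpq, rfl | rfl⟩ := h
  exacts [⟨q, hpq⟩, ⟨p, swap_mem_hyperplane hpq⟩]

lemma IsMedianGraph.mem_hyperplane_iff (hG : IsMedianGraph G) {p q r s : V} (hpq : G.Adj p q) :
    (r, s) ∈ hyperplane G (p, q) ↔ G.Adj r s ∧ (r ∈ halfspace G p q ↔ s ∉ halfspace G p q) :=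
  and_congr_right fun _ => hG.theta_iff_s10 hpq _

lemma IsMedianGraph.hyperplane_eq_of_mem (hG : IsMedianGraph G) {e f : V × V}
    (he : G.Adj e.1 e.2) (hf : f ∈ hyperplane G e) : hyperplane G f = hyperplane G e := by
  ext g
  refine and_congr_right fun _ => ?_
  rw [hG.theta_iff_s10 he, hG.theta_iff_s10 hf.1]
  rcases hG.halfspace_eq_or_eq_compl_of_theta he hf.1 hf.2 with h | h
  · rw [h]
  · rw [h, Set.mem_compl_iff, Set.mem_compl_iff, not_not]
    tauto

namespace IsLadder

variable {m : ℕ} {a a' b b' : V}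

lemma mem_hyperplane (hG : IsMedianGraph G) (h : IsLadder G m a a' b b') :
    (b, b') ∈ hyperplane G (a, a') := by
  rw [hG.mem_hyperplane_iff h.adj, h.halfspace_eq hG]
  exact ⟨h.adj', iff_of_true (left_mem_halfspace h.adj') (right_notMem_halfspace b b')⟩

/-- Walking down the ladder, the last rung still on the side of `v` and the next one form a
square crossed by the hyperplane of `v v₁`. -/
lemma transverse (hG : IsMedianGraph G) {v v₁ : V} (hvv₁ : G.Adj v v₁)
    (h : IsLadder G m a a' b b') (ha : a ∈ halfspace G v v₁) (ha' : a' ∈ halfspace G v v₁)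
    (hb : b ∉ halfspace G v v₁) (hb' : b' ∉ halfspace G v v₁) :
    Transverse G (hyperplane G (v, v₁)) (hyperplane G (a, a')) := by
  induction m generalizing b b' with
  | zero =>
    obtain rfl := hG.1.dist_eq_zero_iff.mp h.dist_eq
    exact absurd ha hb
  | succ m ih =>
    obtain ⟨c, c', hac, hcb⟩ := h.exists_split hG
    have hcc' : c ∈ halfspace G v v₁ ↔ c' ∈ halfspace G v v₁ := by
      by_contra hcross
      have hvc : (c, c') ∈ hyperplane G (v, v₁) :=
        (hG.mem_hyperplane_iff hvv₁).mpr ⟨hcb.adj, by tauto⟩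
      have haa' : (a, a') ∈ hyperplane G (v, v₁) := by
        rw [← hG.hyperplane_eq_of_mem hvv₁ hvc,
          hG.hyperplane_eq_of_mem h.adj (hac.mem_hyperplane hG)]
        exact mem_hyperplane_self h.adj
      exact ((hG.mem_hyperplane_iff hvv₁).mp haa').2.mp ha ha'
    by_cases hc : c ∈ halfspace G v v₁
    · have hcb₁ : G.Adj c b := dist_eq_one_iff_adj.mp hcb.dist_eq
      have hc'b'₁ : G.Adj c' b' := dist_eq_one_iff_adj.mp hcb.dist_eq'
      exact ⟨c, b, c', b', (hG.mem_hyperplane_iff hvv₁).mpr ⟨hcb₁, by tauto⟩,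
        (hG.mem_hyperplane_iff hvv₁).mpr ⟨hc'b'₁, by tauto⟩, hac.mem_hyperplane hG,
        h.mem_hyperplane hG, hcb₁, hc'b'₁, hcb.adj, h.adj'⟩
    · exact ih hac hc (hcc'.not.mp hc)

end IsLadder

lemma IsMedianGraph.wv_injective (hG : IsMedianGraph G) (hext : ∀ v : V, ¬ LinkIsCone G v) :
    Function.Injective (Wv G) := by
  intro v u hvu
  by_contra hne
  obtain ⟨v₁, hvv₁, hdist⟩ := hG.exists_adj_dist_succ hne
  refine hext v ⟨hyperplane G (v, v₁),
    ⟨⟨(v, v₁), hvv₁, rfl⟩, (v, v₁), mem_hyperplane_self hvv₁, .inl rfl⟩, ?_⟩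
  intro h' hh'v hne'
  have hh'u : h' ∈ Wv G u := hvu ▸ hh'v
  obtain ⟨e, he, rfl⟩ : ∃ e : V × V, G.Adj e.1 e.2 ∧ h' = hyperplane G e := hh'v.1
  obtain ⟨w, hw⟩ := exists_mem_hyperplane_of_adjTo hh'v.2
  obtain ⟨z, hz⟩ := exists_mem_hyperplane_of_adjTo hh'u.2
  rw [← hG.hyperplane_eq_of_mem he hw] at hne' hz ⊢
  have same_side : ∀ {r s : V}, (r, s) ∈ hyperplane G (v, w) →
      (r ∈ halfspace G v v₁ ↔ s ∈ halfspace G v v₁) := by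
    intro r s hrs
    by_contra hcross
    apply hne'
    rw [← hG.hyperplane_eq_of_mem hw.1 hrs,
      hG.hyperplane_eq_of_mem hvv₁ ((hG.mem_hyperplane_iff hvv₁).mpr ⟨hrs.1, by tauto⟩)]
  have hv : v ∈ halfspace G v v₁ := left_mem_halfspace hvv₁
  have hu : u ∉ halfspace G v v₁ := by
    simp only [halfspace, Set.mem_ofPred_eq, dist_comm (u := u)]
    omega
  have hw' := (same_side (mem_hyperplane_self hw.1)).mp hv
  have hz' := (same_side hz).not.mp hu
  rcases hG.isLadder_of_theta hw.1 hz.1 hz.2 with hL | hL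
  · exact hL.transverse hG hvv₁ hv hw' hu hz'
  · exact hL.transverse hG hvv₁ hv hw' hz' hu

section Ical0

variable {w u : Set (V × V)}

lemma mem_ical0_iff : u ∈ Ical0 G w ↔
    IsHyperplane G u ∧ IsHyperplane G w ∧ ∀ v, AdjTo G u v ↔ AdjTo G w v :=
  ⟨fun ⟨⟨hu, huw⟩, hw, hwu⟩ => ⟨hu, hw, fun v => ⟨hwu v, huw v⟩⟩,
    fun ⟨hu, hw, h⟩ => ⟨⟨hu, fun v => (h v).mpr⟩, hw, fun v => (h v).mp⟩⟩

lemma mem_ical0_self (hw : IsHyperplane G w) : w ∈ Ical0 G w :=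
  mem_ical0_iff.mpr ⟨hw, hw, fun _ => Iff.rfl⟩

lemma isHyperplane_of_mem_ical0 (h : u ∈ Ical0 G w) : IsHyperplane G u := h.1.1

lemma mem_ical0_comm : u ∈ Ical0 G w ↔ w ∈ Ical0 G u := And.comm

lemma adjTo_iff_of_mem_ical0 (h : u ∈ Ical0 G w) (v : V) : AdjTo G u v ↔ AdjTo G w v :=
  (mem_ical0_iff.mp h).2.2 v

lemma ical0_eq_of_mem (h : u ∈ Ical0 G w) : Ical0 G u = Ical0 G w := by
  ext t
  simp only [mem_ical0_iff (u := t), mem_ical0_iff.mp h, true_and]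

lemma mem_wv_iff_of_mem_ical0 (h : u ∈ Ical0 G w) (v : V) : u ∈ Wv G v ↔ w ∈ Wv G v := by
  obtain ⟨hu, hw, -⟩ := mem_ical0_iff.mp h
  simp only [Wv, Set.mem_ofPred_eq, hu, hw, adjTo_iff_of_mem_ical0 h, true_and]

lemma contact_iff_of_mem_ical0 {w' u' : Set (V × V)} (hw : w' ∈ Ical0 G w)
    (hu : u' ∈ Ical0 G u) : Contact G w' u' ↔ Contact G w u := by
  simp only [Contact, adjTo_iff_of_mem_ical0 hw, adjTo_iff_of_mem_ical0 hu]

end Ical0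

def PreservesIcal0 (G : SimpleGraph V) (f : Hyp G → Hyp G) : Prop :=
  ∀ h : Hyp G, (f h).1 ∈ Ical0 G h.1

namespace PreservesIcal0

def toIso {ψ : Equiv.Perm (Hyp G)} (hψ : PreservesIcal0 G ψ) :
    contactGraph G ≃g contactGraph G where
  toEquiv := ψ
  map_rel_iff' {a b} := by
    change (ψ a ≠ ψ b ∧ _) ↔ (a ≠ b ∧ _)
    rw [contact_iff_of_mem_ical0 (hψ a) (hψ b), ψ.injective.ne_iff]

@[simp]
lemma toIso_apply {ψ : Equiv.Perm (Hyp G)} (hψ : PreservesIcal0 G ψ) (h : Hyp G) :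
    hψ.toIso h = ψ h :=
  rfl

lemma symm {ψ : contactGraph G ≃g contactGraph G} (hψ : PreservesIcal0 G ψ) :
    PreservesIcal0 G ψ.symm := fun h => by
  simpa [mem_ical0_comm] using hψ (ψ.symm h)

lemma swap {w u : Hyp G} (hu : u.1 ∈ Ical0 G w.1) : PreservesIcal0 G (Equiv.swap w u) := by
  intro h
  rw [Equiv.swap_apply_def]
  split_ifs with hw hu'
  · subst hw
    exact hu
  · subst hu'
    rw [ical0_eq_of_mem hu]
    exact mem_ical0_self w.2
  · exact mem_ical0_self h.2

end PreservesIcal0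

lemma inducesPerm_one_iff (ψ : contactGraph G ≃g contactGraph G) :
    InducesPerm G ψ 1 ↔ PreservesIcal0 G ψ := by
  refine ⟨fun hψ h => mem_ical0_iff.mpr ⟨(ψ h).2, h.2, fun v => ?_⟩,
    fun hψ v h => (mem_wv_iff_of_mem_ical0 (hψ h) v).symm⟩
  exact ⟨fun hv => ((hψ v h).mpr ⟨(ψ h).2, hv⟩).2, fun hv => ((hψ v h).mp ⟨h.2, hv⟩).2⟩

lemma PreservesIcal0.eq_one_of_inducesPerm (hG : IsMedianGraph G)
    (hext : ∀ v : V, ¬ LinkIsCone G v) {ψ : contactGraph G ≃g contactGraph G}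
    {π : Equiv.Perm V} (hψ : PreservesIcal0 G ψ) (hπ : InducesPerm G ψ π) : π = 1 := by
  ext v
  refine hG.wv_injective hext (Set.ext fun x => ?_)
  by_cases hx : IsHyperplane G x
  · have hv := hπ v (ψ.symm ⟨x, hx⟩)
    rw [ψ.apply_symm_apply] at hv
    rw [Equiv.Perm.one_apply, ← hv, mem_wv_iff_of_mem_ical0 (hψ.symm ⟨x, hx⟩)]
  · simp [Wv, hx]

abbrev Ical0Class (G : SimpleGraph V) := {c : Set (Set (V × V)) // ∃ h : Hyp G, c = Ical0 G h.1}

def ical0Class (h : Hyp G) : Ical0Class G := ⟨Ical0 G h.1, h, rfl⟩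

namespace Ical0Class

variable (c : Ical0Class G)

lemma ical0_eq {x : Set (V × V)} (hx : x ∈ c.1) : Ical0 G x = c.1 := by
  obtain ⟨h, hc⟩ := c.2
  rw [hc] at hx ⊢
  exact ical0_eq_of_mem hx

lemma isHyperplane {x : Set (V × V)} (hx : x ∈ c.1) : IsHyperplane G x := by
  obtain ⟨h, hc⟩ := c.2
  exact isHyperplane_of_mem_ical0 (hc ▸ hx)

def toHyp (x : ↥c.1) : Hyp G := ⟨x.1, c.isHyperplane x.2⟩

end Ical0Class

variable (G) in
def hypEquivSigma : Hyp G ≃ Σ c : Ical0Class G, ↥c.1 where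
  toFun h := ⟨ical0Class h, h.1, mem_ical0_self h.2⟩
  invFun p := p.1.toHyp p.2
  left_inv _ := rfl
  right_inv p := Sigma.subtype_ext (Subtype.ext (p.1.ical0_eq p.2.2)) rfl

namespace PreservesIcal0

variable {ψ : contactGraph G ≃g contactGraph G}

def restrict (hψ : PreservesIcal0 G ψ) (c : Ical0Class G) : Equiv.Perm ↥c.1 where
  toFun x := ⟨(ψ (c.toHyp x)).1, c.ical0_eq x.2 ▸ hψ (c.toHyp x)⟩
  invFun x := ⟨(ψ.symm (c.toHyp x)).1, c.ical0_eq x.2 ▸ hψ.symm (c.toHyp x)⟩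
  left_inv x := by simp [Ical0Class.toHyp]
  right_inv x := by simp [Ical0Class.toHyp]

lemma restrict_mul {ψ₁ ψ₂ : contactGraph G ≃g contactGraph G} (hψ : PreservesIcal0 G ψ)
    (hψ₁ : PreservesIcal0 G ψ₁) (hψ₂ : PreservesIcal0 G ψ₂) (hcomp : ∀ h, ψ h = ψ₂ (ψ₁ h)) :
    hψ.restrict = hψ₂.restrict * hψ₁.restrict := by
  funext c
  ext x
  simp only [restrict, Equiv.coe_fn_mk, hcomp]
  rfl

end PreservesIcal0

lemma preservesIcal0_ofPi (σ : ∀ c : Ical0Class G, Equiv.Perm ↥c.1) :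
    PreservesIcal0 G ((hypEquivSigma G).symm.permCongr (Equiv.Perm.sigmaCongrRight σ)) :=
  fun h => (σ (ical0Class h) ⟨h.1, mem_ical0_self h.2⟩).2

variable (G) in
def ical0PreservingEquivPi :
    {ψ : contactGraph G ≃g contactGraph G // PreservesIcal0 G ψ} ≃
      ∀ c : Ical0Class G, Equiv.Perm ↥c.1 where
  toFun ψ := ψ.2.restrict
  invFun σ := ⟨(preservesIcal0_ofPi σ).toIso, (preservesIcal0_ofPi σ)⟩
  left_inv _ := rfl
  right_inv σ := by
    funext c
    refine Equiv.ext fun x => Subtype.ext ?_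
    -- the round trip through `hypEquivSigma` transports the class of `x` back to `c`
    exact congrArg (fun p : Σ c : Ical0Class G, ↥c.1 => (σ p.1 p.2).1)
      ((hypEquivSigma G).apply_symm_apply ⟨c, x⟩)

lemma forall_preservesIcal0_eq_self_iff :
    (∀ ψ : contactGraph G ≃g contactGraph G, PreservesIcal0 G ψ → ∀ h, ψ h = h) ↔
      ∀ h : Hyp G, Ical0 G h.1 = {h.1} := by
  refine ⟨fun H w => Set.ext fun u => ⟨fun hu => ?_, ?_⟩, fun H ψ hψ h => ?_⟩
  · have hswap := PreservesIcal0.swap (u := ⟨u, isHyperplane_of_mem_ical0 hu⟩) hu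
    have hfix := H hswap.toIso hswap w
    rw [PreservesIcal0.toIso_apply, Equiv.swap_apply_left] at hfix
    exact congrArg Subtype.val hfix
  · rintro rfl
    exact mem_ical0_self w.2
  · exact Subtype.ext (by simpa [H h] using hψ h)

theorem kernel_of_rho_general (G : SimpleGraph V) (hG : IsMedianGraph G)
    (hext : ∀ v : V, ¬ LinkIsCone G v) :
    -- every permutation of the hyperplanes preserving each class I⁰(w) is an
    -- automorphism of the contact graph
    (∀ ψ : Equiv.Perm (Hyp G), (∀ h : Hyp G, (ψ h).1 ∈ Ical0 G h.1) →
      ∃ Ψ : contactGraph G ≃g contactGraph G, ∀ h : Hyp G, Ψ h = ψ h) ∧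
    -- ker ρ = N
    (∀ (ψ : contactGraph G ≃g contactGraph G) (π : Equiv.Perm V),
      InducesPerm G ψ π → (π = 1 ↔ ∀ h : Hyp G, (ψ h).1 ∈ Ical0 G h.1)) ∧
    -- N is isomorphic to the direct product of the symmetric groups Sym(I⁰(w))
    (∃ e : {ψ : contactGraph G ≃g contactGraph G // ∀ h : Hyp G, (ψ h).1 ∈ Ical0 G h.1} ≃
        ((c : {c : Set (Set (V × V)) // ∃ h : Hyp G, c = Ical0 G h.1}) → Equiv.Perm ↥c.1),
      ∀ ψ₁ ψ₂ ψ₃ : {ψ : contactGraph G ≃g contactGraph G //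
          ∀ h : Hyp G, (ψ h).1 ∈ Ical0 G h.1},
        (∀ h : Hyp G, ψ₃.1 h = ψ₂.1 (ψ₁.1 h)) → e ψ₃ = e ψ₂ * e ψ₁) ∧
    -- ρ is injective iff every I⁰(w) is a singleton
    ((∀ (ψ : contactGraph G ≃g contactGraph G) (π : Equiv.Perm V),
        InducesPerm G ψ π → π = 1 → ∀ h : Hyp G, ψ h = h) ↔
      ∀ h : Hyp G, Ical0 G h.1 = {h.1}) := by
  refine ⟨fun ψ hψ => ⟨PreservesIcal0.toIso hψ, fun _ => rfl⟩,
    fun ψ π hπ => ⟨?_, fun hψ => PreservesIcal0.eq_one_of_inducesPerm hG hext hψ hπ⟩,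
    ⟨ical0PreservingEquivPi G, fun ψ₁ ψ₂ ψ₃ => PreservesIcal0.restrict_mul ψ₃.2 ψ₁.2 ψ₂.2⟩, ?_⟩
  · rintro rfl
    exact (inducesPerm_one_iff ψ).mp hπ
  · rw [← forall_preservesIcal0_eq_self_iff]
    refine ⟨fun H ψ hψ => H ψ 1 ((inducesPerm_one_iff ψ).mpr hψ) rfl, ?_⟩
    rintro H ψ π hπ rfl
    exact H ψ ((inducesPerm_one_iff ψ).mp hπ)

/-- the kernel of `ρ : Aut(𝒞(X)) → Sym(X⁰)` is the subgroup `N` of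
permutations of the hyperplanes preserving each class `I⁰(w)`; `N` is isomorphic to the
direct product of the symmetric groups `Sym(I⁰(w))`; and `ρ` is injective iff every
`I⁰(w)` is a singleton. -/
theorem kernel_of_rho (G : SimpleGraph V) (hG : IsMedianGraph G)
    (hULF : UnifLocFinite G) (hext : ∀ v : V, ¬ LinkIsCone G v) :
    -- every permutation of the hyperplanes preserving each class I⁰(w) is an
    -- automorphism of the contact graph
    (∀ ψ : Equiv.Perm (Hyp G), (∀ h : Hyp G, (ψ h).1 ∈ Ical0 G h.1) →
      ∃ Ψ : contactGraph G ≃g contactGraph G, ∀ h : Hyp G, Ψ h = ψ h) ∧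
    -- ker ρ = N
    (∀ (ψ : contactGraph G ≃g contactGraph G) (π : Equiv.Perm V),
      InducesPerm G ψ π → (π = 1 ↔ ∀ h : Hyp G, (ψ h).1 ∈ Ical0 G h.1)) ∧
    -- N is isomorphic to the direct product of the symmetric groups Sym(I⁰(w))
    (∃ e : {ψ : contactGraph G ≃g contactGraph G // ∀ h : Hyp G, (ψ h).1 ∈ Ical0 G h.1} ≃
        ((c : {c : Set (Set (V × V)) // ∃ h : Hyp G, c = Ical0 G h.1}) → Equiv.Perm ↥c.1),
      ∀ ψ₁ ψ₂ ψ₃ : {ψ : contactGraph G ≃g contactGraph G //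
          ∀ h : Hyp G, (ψ h).1 ∈ Ical0 G h.1},
        (∀ h : Hyp G, ψ₃.1 h = ψ₂.1 (ψ₁.1 h)) → e ψ₃ = e ψ₂ * e ψ₁) ∧
    -- ρ is injective iff every I⁰(w) is a singleton
    ((∀ (ψ : contactGraph G ≃g contactGraph G) (π : Equiv.Perm V),
        InducesPerm G ψ π → π = 1 → ∀ h : Hyp G, ψ h = h) ↔
      ∀ h : Hyp G, Ical0 G h.1 = {h.1}) :=
  kernel_of_rho_general G hG hext
end
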